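/- arXiv:1710.04107 — 11 statements merged into one kernel-verified Lean document; each statement's English description precedes it below -/
import Mathlib

section
/- Let π, τ ∈ Av(312,213) with τ nonempty. Then: (1) 1⊕π ≼ 1⊕τ if and only if π ≼ τ; (2) 1⊕π ≼ τ⊖1 if and only if 1⊕π ≼ τ; (3) π⊖1 ≼ 1⊕τ if and only if π⊖1 ≼ τ; and (4) π⊖1 ≼ τ⊖1 if and only if π ≼ τ. -/
/-- `l` is the one-line notation of a permutation of `{1, …, l.length}`. -/
def IsPermList (l : List ℕ) : Prop :=
  l.Perm ((List.range l.length).map (· + 1))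

/-- `Involves σ τ` means the permutation (in one-line notation) `σ` is involved in `τ`
(written σ ≼ τ): there is a strictly increasing map of positions matching relative order. -/
def Involves (σ τ : List ℕ) : Prop :=
  ∃ f : Fin σ.length → Fin τ.length, StrictMono f ∧
    ∀ i j : Fin σ.length, σ.get i < σ.get j ↔ τ.get (f i) < τ.get (f j)

/-- Direct sum `σ ⊕ τ` of permutations in one-line notation. -/
def dsum (σ τ : List ℕ) : List ℕ := σ ++ τ.map (· + σ.length)

/-- Skew sum `σ ⊖ τ` of permutations in one-line notation. -/
def ssum (σ τ : List ℕ) : List ℕ := σ.map (· + τ.length) ++ τ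

/-!
An occurrence of `σ` in `τ` is the same thing as a list of pairs `(σᵢ, τ_{f(i)})` whose first
coordinates spell `σ`, whose second coordinates form a subsequence of `τ`, and on which the two
coordinates are compared alike. In this form, adding `1` to all entries, reversing both
permutations, and adjoining a least entry at the front or at the end become list operations.
A least entry at the front (end) of the pattern can always be matched with the least entry at the
front (end) of the text, and conversely the text's least entry at the wrong end cannot be used
unless the pattern has length one.
-/

open List

def ComparisonsAgree (ps : List (ℕ × ℕ)) : Prop :=
  ∀ p ∈ ps, ∀ q ∈ ps, p.1 < q.1 ↔ p.2 < q.2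

theorem ComparisonsAgree.sublist {ps qs : List (ℕ × ℕ)} (h : ComparisonsAgree ps)
    (hqs : qs <+ ps) : ComparisonsAgree qs :=
  fun p hp q hq => h p (hqs.subset hp) q (hqs.subset hq)

theorem comparisonsAgree_reverse_iff {ps : List (ℕ × ℕ)} :
    ComparisonsAgree ps.reverse ↔ ComparisonsAgree ps := by
  simp only [ComparisonsAgree, mem_reverse]

theorem comparisonsAgree_map_iff {g h : ℕ → ℕ} (hg : StrictMono g) (hh : StrictMono h)
    {ps : List (ℕ × ℕ)} :
    ComparisonsAgree (ps.map (Prod.map g h)) ↔ ComparisonsAgree ps := by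
  refine ⟨fun hps p hp q hq => ?_, fun hps => ?_⟩
  · simpa [hg.lt_iff_lt, hh.lt_iff_lt] using hps _ (mem_map_of_mem hp) _ (mem_map_of_mem hq)
  · simp only [ComparisonsAgree, mem_map]
    rintro _ ⟨p, hp, rfl⟩ _ ⟨q, hq, rfl⟩
    simpa [hg.lt_iff_lt, hh.lt_iff_lt] using hps p hp q hq

theorem List.ofFn_get_comp_sublist {α : Type*} {l : List α} {n : ℕ} {f : Fin n → Fin l.length}
    (hf : StrictMono f) : ofFn (l.get ∘ f) <+ l :=
  sublist_iff_exists_fin_orderEmbedding_get_eq.mpr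
    ⟨(Fin.castOrderIso (length_ofFn)).toOrderEmbedding.trans (OrderEmbedding.ofStrictMono f hf),
      fun _ => by simp; rfl⟩

theorem involves_iff_exists_pairs {σ τ : List ℕ} :
    Involves σ τ ↔ ∃ ps : List (ℕ × ℕ), ComparisonsAgree ps ∧ ps.map Prod.fst = σ ∧
      ps.map Prod.snd <+ τ := by
  constructor
  · rintro ⟨f, hf, hcmp⟩
    refine ⟨ofFn fun i => (σ.get i, τ.get (f i)), ?_, by simp [map_ofFn, Function.comp_def], ?_⟩
    · simp only [ComparisonsAgree, mem_ofFn]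
      rintro _ ⟨i, rfl⟩ _ ⟨j, rfl⟩
      exact hcmp i j
    · simpa [map_ofFn, Function.comp_def] using ofFn_get_comp_sublist hf
  · rintro ⟨ps, hps, rfl, hsub⟩
    obtain ⟨e, he⟩ := sublist_iff_exists_fin_orderEmbedding_get_eq.mp hsub
    refine ⟨fun i => e (Fin.cast (by simp) i), fun i j hij => e.strictMono hij, fun i j => ?_⟩
    rw [← he, ← he]
    simpa using hps _ (getElem_mem (i.2.trans_eq (length_map _))) _
      (getElem_mem (j.2.trans_eq (length_map _)))

theorem Involves.trans_sublist {σ τ τ' : List ℕ} (h : Involves σ τ) (hτ : τ <+ τ') :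
    Involves σ τ' := by
  obtain ⟨ps, hps, hfst, hsnd⟩ := involves_iff_exists_pairs.mp h
  exact involves_iff_exists_pairs.mpr ⟨ps, hps, hfst, hsnd.trans hτ⟩

theorem involves_singleton (a : ℕ) {τ : List ℕ} (hτ : τ ≠ []) : Involves [a] τ := by
  obtain ⟨y, hy⟩ := exists_mem_of_ne_nil τ hτ
  exact involves_iff_exists_pairs.mpr
    ⟨[(a, y)], by simp [ComparisonsAgree], rfl, singleton_sublist.mpr hy⟩

theorem involves_map_iff {g h : ℕ → ℕ} (hg : StrictMono g) (hh : StrictMono h)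
    {σ τ : List ℕ} : Involves (σ.map g) (τ.map h) ↔ Involves σ τ := by
  simp only [involves_iff_exists_pairs]
  constructor
  · rintro ⟨ps, hps, hfst, hsnd⟩
    obtain ⟨l, hl, hsnd⟩ := sublist_map_iff.mp hsnd
    have hlen : σ.length = l.length := by
      have h₁ := congrArg length hfst
      have h₂ := congrArg length hsnd
      simp only [length_map] at h₁ h₂
      omega
    have hps_eq : ps = (σ.zip l).map (Prod.map g h) := by
      rw [← zip_map, ← hfst, ← hsnd, ← unzip_fst, ← unzip_snd, zip_unzip]
    refine ⟨σ.zip l, (comparisonsAgree_map_iff hg hh).mp (hps_eq ▸ hps), map_fst_zip hlen.le, ?_⟩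
    rw [map_snd_zip hlen.ge]
    exact hl
  · rintro ⟨ps, hps, rfl, hsnd⟩
    exact ⟨ps.map (Prod.map g h), (comparisonsAgree_map_iff hg hh).mpr hps, by simp,
      by simpa [Function.comp_def] using hsnd.map h⟩

theorem involves_map_right_iff {h : ℕ → ℕ} (hh : StrictMono h) {σ τ : List ℕ} :
    Involves σ (τ.map h) ↔ Involves σ τ := by
  simpa using involves_map_iff strictMono_id hh (σ := σ)

theorem involves_reverse_iff {σ τ : List ℕ} : Involves σ.reverse τ.reverse ↔ Involves σ τ := by
  suffices ∀ {σ τ : List ℕ}, Involves σ τ → Involves σ.reverse τ.reverse from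
    ⟨fun h => by simpa using this h, this⟩
  intro σ τ h
  obtain ⟨ps, hps, rfl, hsnd⟩ := involves_iff_exists_pairs.mp h
  exact involves_iff_exists_pairs.mpr ⟨ps.reverse, comparisonsAgree_reverse_iff.mpr hps,
    map_reverse .., by simpa [map_reverse] using hsnd.reverse⟩

theorem involves_cons_cons_iff {a b : ℕ} {σ τ : List ℕ} (ha : ∀ x ∈ σ, a < x)
    (hb : ∀ y ∈ τ, b < y) : Involves (a :: σ) (b :: τ) ↔ Involves σ τ := by
  simp only [involves_iff_exists_pairs]
  constructor
  · rintro ⟨_ | ⟨p, ps⟩, hps, hfst, hsnd⟩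
    · simp at hfst
    · simp only [map_cons, cons.injEq] at hfst
      exact ⟨ps, hps.sublist (sublist_cons_self p ps), hfst.2, by simpa using hsnd.tail⟩
  · rintro ⟨ps, hps, rfl, hsnd⟩
    refine ⟨(a, b) :: ps, ?_, rfl, cons_sublist_cons.mpr hsnd⟩
    have hfst_gt : ∀ p ∈ ps, a < p.1 := fun p hp => ha _ (mem_map_of_mem hp)
    have hsnd_gt : ∀ p ∈ ps, b < p.2 := fun p hp => hb _ (hsnd.subset (mem_map_of_mem hp))
    simp only [ComparisonsAgree, mem_cons]
    rintro p (rfl | hp) q (rfl | hq)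
    · simp
    · simp [hfst_gt q hq, hsnd_gt q hq]
    · simp [(hfst_gt p hp).asymm, (hsnd_gt p hp).asymm]
    · exact hps p hp q hq

theorem involves_append_singleton_iff {a b : ℕ} {σ τ : List ℕ} (ha : ∀ x ∈ σ, a < x)
    (hb : ∀ y ∈ τ, b < y) : Involves (σ ++ [a]) (τ ++ [b]) ↔ Involves σ τ := by
  rw [← involves_reverse_iff, reverse_append, reverse_append, reverse_singleton, reverse_singleton,
    singleton_append, singleton_append, involves_cons_cons_iff (by simpa using ha)
    (by simpa using hb), involves_reverse_iff]

theorem involves_append_singleton_cons_iff {a b : ℕ} {σ τ : List ℕ} (ha : ∀ x ∈ σ, a < x)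
    (hb : ∀ y ∈ τ, b ≤ y) (hτ : τ ≠ []) :
    Involves (σ ++ [a]) (b :: τ) ↔ Involves (σ ++ [a]) τ := by
  refine ⟨fun h => ?_, fun h => h.trans_sublist (sublist_cons_self b τ)⟩
  obtain ⟨ps, hps, hfst, hsnd⟩ := involves_iff_exists_pairs.mp h
  rcases sublist_cons_iff.mp hsnd with hsnd | ⟨r, hr, -⟩
  · exact involves_iff_exists_pairs.mpr ⟨ps, hps, hfst, hsnd⟩
  obtain ⟨d, hd⟩ : ∃ d, (a, d) ∈ ps := by
    simpa using (hfst ▸ mem_append_right σ (mem_singleton_self a) : a ∈ ps.map Prod.fst)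
  have hbd : b ≤ d := by
    rcases mem_cons.mp (hsnd.subset (mem_map_of_mem (f := Prod.snd) hd)) with h | h
    · exact h.ge
    · exact hb d h
  obtain _ | ⟨p, ps⟩ := ps
  · simp at hr
  simp only [map_cons, cons.injEq] at hr hfst
  obtain _ | ⟨x, σ⟩ := σ
  · simpa using involves_singleton a hτ
  · simp only [cons_append, cons.injEq] at hfst
    -- `b` is matched with the first entry `x > a`, so the match `d` of `a` lies below `b`.
    have hdb : d < b := hr.1 ▸ (hps (a, d) hd p (mem_cons_self ..)).mp (hfst.1 ▸ ha x (by simp))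
    omega

theorem involves_cons_append_singleton_iff {a b : ℕ} {σ τ : List ℕ} (ha : ∀ x ∈ σ, a < x)
    (hb : ∀ y ∈ τ, b ≤ y) (hτ : τ ≠ []) :
    Involves (a :: σ) (τ ++ [b]) ↔ Involves (a :: σ) τ := by
  rw [← involves_reverse_iff, ← involves_reverse_iff (τ := τ), reverse_cons, reverse_append,
    reverse_singleton, singleton_append]
  exact involves_append_singleton_cons_iff (by simpa using ha) (by simpa using hb)
    (by simpa using hτ)

theorem IsPermList.pos {l : List ℕ} (hl : IsPermList l) {x : ℕ} (hx : x ∈ l) : 0 < x := by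
  obtain ⟨k, -, rfl⟩ := mem_map.mp (hl.mem_iff.mp hx)
  exact k.succ_pos

theorem dsum_one_left (π : List ℕ) : dsum [1] π = 1 :: π.map (· + 1) := rfl

theorem ssum_one_right (π : List ℕ) : ssum π [1] = π.map (· + 1) ++ [1] := rfl

theorem order_in_wedges_general (π τ : List ℕ) (hπ : IsPermList π) (hτ : IsPermList τ)
    (hτne : τ ≠ []) :
    (Involves (dsum [1] π) (dsum [1] τ) ↔ Involves π τ) ∧
    (Involves (dsum [1] π) (ssum τ [1]) ↔ Involves (dsum [1] π) τ) ∧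
    (Involves (ssum π [1]) (dsum [1] τ) ↔ Involves (ssum π [1]) τ) ∧
    (Involves (ssum π [1]) (ssum τ [1]) ↔ Involves π τ) := by
  have hsucc : StrictMono (· + 1 : ℕ → ℕ) := strictMono_id.add_const 1
  have hπ' : ∀ x ∈ π.map (· + 1), 1 < x := by simpa using fun x hx => hπ.pos hx
  have hτ' : ∀ y ∈ τ.map (· + 1), 1 < y := by simpa using fun y hy => hτ.pos hy
  have hτne' : τ.map (· + 1) ≠ [] := by simpa using hτne
  simp only [dsum_one_left, ssum_one_right]
  exact ⟨(involves_cons_cons_iff hπ' hτ').trans (involves_map_iff hsucc hsucc),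
    (involves_cons_append_singleton_iff hπ' (fun y hy => (hτ' y hy).le) hτne').trans
      (involves_map_right_iff hsucc),
    (involves_append_singleton_cons_iff hπ' (fun y hy => (hτ' y hy).le) hτne').trans
      (involves_map_right_iff hsucc),
    (involves_append_singleton_iff hπ' hτ').trans (involves_map_iff hsucc hsucc)⟩

/-- Recursive description of the involvement order on `Av(312, 213)`. -/
theorem order_in_wedges (π τ : List ℕ) (hπ : IsPermList π) (hτ : IsPermList τ)
    (hπC : ¬ Involves [3, 1, 2] π ∧ ¬ Involves [2, 1, 3] π)
    (hτC : ¬ Involves [3, 1, 2] τ ∧ ¬ Involves [2, 1, 3] τ)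
    (hτne : τ ≠ []) :
    (Involves (dsum [1] π) (dsum [1] τ) ↔ Involves π τ) ∧
    (Involves (dsum [1] π) (ssum τ [1]) ↔ Involves (dsum [1] π) τ) ∧
    (Involves (ssum π [1]) (dsum [1] τ) ↔ Involves (ssum π [1]) τ) ∧
    (Involves (ssum π [1]) (ssum τ [1]) ↔ Involves π τ) :=
  order_in_wedges_general π τ hπ hτ hτne
end

section
/- Let P and Q be (possibly empty) lists of positive integers and let a, b be positive integers. Then for every n, the number of compositions of n avoiding the composition P++[a,b]++Q equals the number of compositions of n avoiding P++[b,a]++Q. -/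
/-!
Embed `P` greedily from the left and `Q` greedily from the right. This cuts a composition
`c` as `u ++ v ++ w` with `u` the shortest prefix into which `P` embeds and `w` the shortest
suffix into which `Q` embeds, and then `c` contains `P ++ M ++ Q` exactly when `v` contains `M`.
Since a greedy prefix does not depend on what follows it, reversing `v` is an involution; it
permutes the parts, and `v` contains `[a, b]` iff `v.reverse` contains `[b, a]`.
-/

/-- The composition `A` is contained in the composition `B`: some sublist of `B`
of the same length as `A` dominates `A` term by term. -/
def CompContains (A B : List ℕ) : Prop :=
  ∃ s : List ℕ, s.Sublist B ∧ List.Forall₂ (· ≤ ·) A s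

open List

section GreedyEmbedding

variable {α β : Type*} {R : α → β → Prop}

theorem List.SublistForall₂.of_cons {a : α} {A : List α} {c : List β}
    (h : SublistForall₂ R (a :: A) c) : SublistForall₂ R A c := by
  obtain ⟨_, hs, hsc⟩ := sublistForall₂_iff.1 h
  obtain _ | ⟨-, hs⟩ := hs
  exact sublistForall₂_iff.2 ⟨_, hs, (sublist_cons_self _ _).trans hsc⟩

theorem sublistForall₂_reverse_iff {A : List α} {c : List β} :
    SublistForall₂ R A.reverse c.reverse ↔ SublistForall₂ R A c := by
  suffices h : ∀ (A : List α) (c : List β),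
      SublistForall₂ R A c → SublistForall₂ R A.reverse c.reverse from
    ⟨fun hA => by simpa using h _ _ hA, h A c⟩
  intro A c hA
  obtain ⟨s, hs, hsc⟩ := sublistForall₂_iff.1 hA
  exact sublistForall₂_iff.2 ⟨s.reverse, forall₂_reverse_iff.2 hs, hsc.reverse⟩

variable (R) [DecidableRel R]

/-- Leftmost greedy embedding of `A` into `c`: splits `c` as `u ++ l` where `u` is the shortest
prefix of `c` into which `A` embeds. -/
def greedySplit : List α → List β → Option (List β × List β)
  | [], c => some ([], c)
  | _ :: _, [] => none
  | a :: A, b :: c =>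
    (if R a b then greedySplit A c else greedySplit (a :: A) c).map fun p => (b :: p.1, p.2)

def IsGreedyPrefix (A : List α) (u : List β) : Prop :=
  ∀ x, greedySplit R A (u ++ x) = some (u, x)

def swapMiddle (P Q : List α) (c : List β) : List β :=
  match greedySplit R P c with
  | some (u, l) =>
    match greedySplit R Q.reverse l.reverse with
    -- `v` is cut from `l.reverse`, so it is the middle segment already reversed
    | some (w, v) => u ++ v ++ w.reverse
    | none => c
  | none => c

variable {R}

@[simp]
theorem greedySplit_nil (c : List β) : greedySplit R [] c = some ([], c) := by
  cases c <;> rfl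

@[simp]
theorem greedySplit_cons_nil (a : α) (A : List α) : greedySplit R (a :: A) [] = none := rfl

theorem greedySplit_cons_cons (a : α) (A : List α) (b : β) (c : List β) :
    greedySplit R (a :: A) (b :: c) =
      (if R a b then greedySplit R A c else greedySplit R (a :: A) c).map
        fun p => (b :: p.1, p.2) := rfl

theorem greedySplit_eq_some_iff {A : List α} {c u l : List β} :
    greedySplit R A c = some (u, l) ↔ c = u ++ l ∧ IsGreedyPrefix R A u := by
  refine ⟨fun h => ?_, fun ⟨hc, hu⟩ => hc ▸ hu l⟩
  induction c generalizing A u with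
  | nil =>
    cases A with
    | nil =>
      rw [greedySplit_nil] at h
      cases h
      exact ⟨rfl, greedySplit_nil⟩
    | cons a A => simp at h
  | cons b c ih =>
    cases A with
    | nil =>
      rw [greedySplit_nil] at h
      cases h
      exact ⟨rfl, greedySplit_nil⟩
    | cons a A =>
      rw [greedySplit_cons_cons, Option.map_eq_some_iff] at h
      obtain ⟨⟨u', l'⟩, h, hp⟩ := h
      obtain ⟨rfl, rfl⟩ := Prod.mk.inj hp
      split_ifs at h with hab
      all_goals
        obtain ⟨rfl, hu⟩ := ih h
        refine ⟨rfl, fun x => ?_⟩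
        simp [greedySplit_cons_cons, hab, hu x]

theorem sublistForall₂_append_iff {A B : List α} {c : List β} :
    SublistForall₂ R (A ++ B) c ↔
      ∃ u l, greedySplit R A c = some (u, l) ∧ SublistForall₂ R B l := by
  constructor
  · intro h
    induction c generalizing A with
    | nil =>
      have hAB : A ++ B = [] := by generalize A ++ B = l at h; cases h; rfl
      obtain ⟨rfl, rfl⟩ := append_eq_nil_iff.1 hAB
      exact ⟨[], [], rfl, .nil⟩
    | cons b c ih =>
      cases A with
      | nil => exact ⟨[], b :: c, greedySplit_nil _, h⟩
      | cons a A =>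
        by_cases hab : R a b
        · have hc : SublistForall₂ R (A ++ B) c := by
            cases h with
            | cons _ h => exact h
            | cons_right h => exact h.of_cons
          obtain ⟨u, l, hs, hB⟩ := ih hc
          exact ⟨b :: u, l, by simp [greedySplit_cons_cons, hab, hs], hB⟩
        · have hc : SublistForall₂ R (a :: A ++ B) c := by
            cases h with
            | cons hab' _ => exact absurd hab' hab
            | cons_right h => exact h
          obtain ⟨u, l, hs, hB⟩ := ih hc
          exact ⟨b :: u, l, by simp [greedySplit_cons_cons, hab, hs], hB⟩
  · rintro ⟨u, l, hs, hB⟩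
    induction c generalizing A u with
    | nil =>
      cases A with
      | nil => rw [greedySplit_nil] at hs; cases hs; exact hB
      | cons a A => simp at hs
    | cons b c ih =>
      cases A with
      | nil => rw [greedySplit_nil] at hs; cases hs; exact hB
      | cons a A =>
        rw [greedySplit_cons_cons, Option.map_eq_some_iff] at hs
        obtain ⟨⟨u', l'⟩, hs, hp⟩ := hs
        obtain ⟨-, rfl⟩ := Prod.mk.inj hp
        split_ifs at hs with hab
        · exact .cons hab (ih _ hs)
        · exact .cons_right (ih _ hs)

theorem IsGreedyPrefix.sublistForall₂_append_iff {A B : List α} {u x : List β}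
    (hu : IsGreedyPrefix R A u) :
    SublistForall₂ R (A ++ B) (u ++ x) ↔ SublistForall₂ R B x := by
  simp [_root_.sublistForall₂_append_iff, hu x]

variable {P Q : List α} {u w : List β}

theorem sublistForall₂_middle_iff (hu : IsGreedyPrefix R P u)
    (hw : IsGreedyPrefix R Q.reverse w) (M : List α) (v : List β) :
    SublistForall₂ R (P ++ M ++ Q) (u ++ v ++ w.reverse) ↔ SublistForall₂ R M v := by
  rw [append_assoc, append_assoc, hu.sublistForall₂_append_iff, ← sublistForall₂_reverse_iff,
    reverse_append, reverse_append, reverse_reverse, hw.sublistForall₂_append_iff,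
    sublistForall₂_reverse_iff]

theorem swapMiddle_append (hu : IsGreedyPrefix R P u) (hw : IsGreedyPrefix R Q.reverse w)
    (v : List β) : swapMiddle R P Q (u ++ v ++ w.reverse) = u ++ v.reverse ++ w.reverse := by
  have hP : greedySplit R P (u ++ v ++ w.reverse) = some (u, v ++ w.reverse) := by
    rw [append_assoc]; exact hu _
  have hQ : greedySplit R Q.reverse (v ++ w.reverse).reverse = some (w, v.reverse) := by
    simpa using hw v.reverse
  simp only [swapMiddle, hP, hQ]

variable (R P Q)

theorem swapMiddle_cases (c : List β) :
    (∃ u v w, IsGreedyPrefix R P u ∧ IsGreedyPrefix R Q.reverse w ∧ c = u ++ v ++ w.reverse) ∨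
      (swapMiddle R P Q c = c ∧ ∀ M, ¬ SublistForall₂ R (P ++ M ++ Q) c) := by
  rcases hP : greedySplit R P c with _ | ⟨u, l⟩
  · refine .inr ⟨by simp [swapMiddle, hP], fun M h => ?_⟩
    rw [append_assoc, sublistForall₂_append_iff] at h
    simp [hP] at h
  rcases hQ : greedySplit R Q.reverse l.reverse with _ | ⟨w, v⟩
  · refine .inr ⟨by simp [swapMiddle, hP, hQ], fun M h => ?_⟩
    rw [append_assoc, sublistForall₂_append_iff] at h
    obtain ⟨u', l', hP', h⟩ := h
    cases hP.symm.trans hP'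
    rw [← sublistForall₂_reverse_iff, reverse_append, sublistForall₂_append_iff] at h
    simp [hQ] at h
  obtain ⟨rfl, hu⟩ := greedySplit_eq_some_iff.1 hP
  obtain ⟨hl, hw⟩ := greedySplit_eq_some_iff.1 hQ
  refine .inl ⟨u, v.reverse, w, hu, hw, ?_⟩
  rw [append_assoc, ← reverse_append, ← hl, reverse_reverse]

theorem swapMiddle_involutive : Function.Involutive (swapMiddle R P Q) := by
  intro c
  rcases swapMiddle_cases R P Q c with ⟨u, v, w, hu, hw, rfl⟩ | ⟨hc, -⟩
  · rw [swapMiddle_append hu hw, swapMiddle_append hu hw, reverse_reverse]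
  · rw [hc, hc]

theorem swapMiddle_perm (c : List β) : swapMiddle R P Q c ~ c := by
  rcases swapMiddle_cases R P Q c with ⟨u, v, w, hu, hw, rfl⟩ | ⟨hc, -⟩
  · rw [swapMiddle_append hu hw]
    exact ((reverse_perm v).append_left u).append_right w.reverse
  · rw [hc]

theorem sublistForall₂_swapMiddle_iff (M : List α) (c : List β) :
    SublistForall₂ R (P ++ M.reverse ++ Q) (swapMiddle R P Q c) ↔
      SublistForall₂ R (P ++ M ++ Q) c := by
  rcases swapMiddle_cases R P Q c with ⟨u, v, w, hu, hw, rfl⟩ | ⟨hc, hM⟩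
  · rw [swapMiddle_append hu hw, sublistForall₂_middle_iff hu hw,
      sublistForall₂_middle_iff hu hw, sublistForall₂_reverse_iff]
  · rw [hc]
    exact iff_of_false (hM _) (hM _)

end GreedyEmbedding

theorem compContains_iff_sublistForall₂ {A B : List ℕ} :
    CompContains A B ↔ SublistForall₂ (· ≤ ·) A B := by
  rw [sublistForall₂_iff, CompContains]
  exact exists_congr fun _ => and_comm

theorem comp_swap_wilf_general (P Q : List ℕ) (a b : ℕ) (n : ℕ) :
    Nat.card {c : List ℕ // (∀ x ∈ c, 0 < x) ∧ c.sum = n ∧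
        ¬ CompContains (P ++ [a, b] ++ Q) c} =
    Nat.card {c : List ℕ // (∀ x ∈ c, 0 < x) ∧ c.sum = n ∧
        ¬ CompContains (P ++ [b, a] ++ Q) c} := by
  refine Nat.card_congr <|
    ((swapMiddle_involutive (· ≤ ·) P Q).toPerm _).subtypeEquiv fun c => ?_
  have hperm := swapMiddle_perm (· ≤ ·) P Q c
  have hswap : SublistForall₂ (· ≤ ·) (P ++ [b, a] ++ Q) (swapMiddle (· ≤ ·) P Q c) ↔ _ :=
    sublistForall₂_swapMiddle_iff (· ≤ ·) P Q [a, b] c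
  simp only [Function.Involutive.coe_toPerm, compContains_iff_sublistForall₂, hperm.mem_iff,
    hperm.sum_eq, hswap]

/-- Swapping two adjacent parts of a forbidden composition pattern preserves the number
of compositions of `n` avoiding it. -/
theorem comp_swap_wilf (P Q : List ℕ) (hP : ∀ x ∈ P, 0 < x) (hQ : ∀ x ∈ Q, 0 < x)
    (a b : ℕ) (ha : 0 < a) (hb : 0 < b) (n : ℕ) :
    Nat.card {c : List ℕ // (∀ x ∈ c, 0 < x) ∧ c.sum = n ∧
        ¬ CompContains (P ++ [a, b] ++ Q) c} =
    Nat.card {c : List ℕ // (∀ x ∈ c, 0 < x) ∧ c.sum = n ∧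
        ¬ CompContains (P ++ [b, a] ++ Q) c} :=
  comp_swap_wilf_general P Q a b n
end

section
/- Let P and Q be (possibly empty) lists of positive integers. Then for every n, the number of compositions of n avoiding the composition P++[1,1]++Q equals the number of compositions of n avoiding P++[2]++Q. -/
/-!
If `c` contains `P` and `Q`, let `u` be its shortest prefix containing `P` and `v` its shortest
suffix containing `Q`. When they do not overlap, `c = u ++ w ++ v` and `c` contains `P ++ R ++ Q`
exactly when the window `w` contains `R`; otherwise `c` avoids every `P ++ R ++ Q`. Minimality of
`u` and `v` is a property of `u` and `v` alone, so replacing `w` by any other window keeps this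
decomposition. Hence a sum-preserving bijection between positive windows avoiding `R` and those
avoiding `S` lifts to one between compositions avoiding `P ++ R ++ Q` and `P ++ S ++ Q`.
For `R = [1, 1]` and `S = [2]` the positive avoiding windows of sum `m > 0` are just `[m]`,
respectively `[1, …, 1]`.
-/

namespace CompMerge

open List

section MinAffix

variable {α : Type*} {p : List α → Prop} {u u' v v' c : List α}

def IsMinPrefix (p : List α → Prop) (u : List α) : Prop :=
  p u ∧ ∀ u', u' <+: u → p u' → u' = u

def IsMinSuffix (p : List α → Prop) (v : List α) : Prop :=
  p v ∧ ∀ v', v' <:+ v → p v' → v' = v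

theorem exists_isMinPrefix (h : p c) : ∃ u, u <+: c ∧ IsMinPrefix p u := by
  obtain ⟨u, ⟨huc, hu⟩, hmin⟩ :=
    (measure length).wf.has_min {u | u <+: c ∧ p u} ⟨c, prefix_refl c, h⟩
  refine ⟨u, huc, hu, fun u' hu'u hu' => hu'u.eq_of_length ?_⟩
  exact le_antisymm hu'u.length_le (not_lt.1 (hmin u' ⟨hu'u.trans huc, hu'⟩))

theorem exists_isMinSuffix (h : p c) : ∃ v, v <:+ c ∧ IsMinSuffix p v := by
  obtain ⟨v, ⟨hvc, hv⟩, hmin⟩ :=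
    (measure length).wf.has_min {v | v <:+ c ∧ p v} ⟨c, suffix_refl c, h⟩
  refine ⟨v, hvc, hv, fun v' hv'v hv' => hv'v.eq_of_length ?_⟩
  exact le_antisymm hv'v.length_le (not_lt.1 (hmin v' ⟨hv'v.trans hvc, hv'⟩))

theorem IsMinPrefix.prefix_of_prefix (hu : IsMinPrefix p u) (huc : u <+: c) (hu'c : u' <+: c)
    (hu' : p u') : u <+: u' := by
  rcases prefix_or_prefix_of_prefix huc hu'c with h | h
  · exact h
  · rw [hu.2 u' h hu']

theorem IsMinSuffix.suffix_of_suffix (hv : IsMinSuffix p v) (hvc : v <:+ c) (hv'c : v' <:+ c)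
    (hv' : p v') : v <:+ v' := by
  rcases suffix_or_suffix_of_suffix hvc hv'c with h | h
  · exact h
  · rw [hv.2 v' h hv']

theorem IsMinPrefix.eq_of_prefix (hu : IsMinPrefix p u) (hu' : IsMinPrefix p u')
    (huc : u <+: c) (hu'c : u' <+: c) : u = u' :=
  hu'.2 u (hu.prefix_of_prefix huc hu'c hu'.1) hu.1

theorem IsMinSuffix.eq_of_suffix (hv : IsMinSuffix p v) (hv' : IsMinSuffix p v')
    (hvc : v <:+ c) (hv'c : v' <:+ c) : v = v' :=
  hv'.2 v (hv.suffix_of_suffix hvc hv'c hv'.1) hv.1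

end MinAffix

theorem exists_append_of_forall₂_append_left {α β : Type*} {r : α → β → Prop} {A B : List α}
    {s : List β} (h : Forall₂ r (A ++ B) s) :
    ∃ s₁ s₂, s = s₁ ++ s₂ ∧ Forall₂ r A s₁ ∧ Forall₂ r B s₂ := by
  induction A generalizing s with
  | nil => exact ⟨[], s, rfl, .nil, h⟩
  | cons a A ih =>
    obtain _ | ⟨hab, h⟩ := h
    obtain ⟨s₁, s₂, rfl, h₁, h₂⟩ := ih h
    exact ⟨_ :: s₁, s₂, rfl, .cons hab h₁, h₂⟩

theorem compContains_append_iff {A B c : List ℕ} :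
    CompContains (A ++ B) c ↔ ∃ c₁ c₂, c = c₁ ++ c₂ ∧ CompContains A c₁ ∧ CompContains B c₂ := by
  constructor
  · rintro ⟨s, hs, hAB⟩
    obtain ⟨s₁, s₂, rfl, h₁, h₂⟩ := exists_append_of_forall₂_append_left hAB
    obtain ⟨c₁, c₂, rfl, hs₁, hs₂⟩ := append_sublist_iff.1 hs
    exact ⟨c₁, c₂, rfl, ⟨s₁, hs₁, h₁⟩, ⟨s₂, hs₂, h₂⟩⟩
  · rintro ⟨c₁, c₂, rfl, ⟨s₁, hs₁, h₁⟩, ⟨s₂, hs₂, h₂⟩⟩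
    exact ⟨s₁ ++ s₂, hs₁.append hs₂, rel_append h₁ h₂⟩

theorem CompContains.mono {A c d : List ℕ} (h : CompContains A c) (hcd : c <+ d) :
    CompContains A d :=
  let ⟨s, hs, hA⟩ := h
  ⟨s, hs.trans hcd, hA⟩

section Window

variable {P Q R S c u w v : List ℕ}

def IsWindowSplit (P Q c u w v : List ℕ) : Prop :=
  c = u ++ w ++ v ∧ IsMinPrefix (CompContains P) u ∧ IsMinSuffix (CompContains Q) v

theorem IsWindowSplit.replace (h : IsWindowSplit P Q c u w v) (w' : List ℕ) :
    IsWindowSplit P Q (u ++ w' ++ v) u w' v :=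
  ⟨rfl, h.2⟩

theorem IsWindowSplit.unique {u' w' v' : List ℕ} (h : IsWindowSplit P Q c u w v)
    (h' : IsWindowSplit P Q c u' w' v') : u = u' ∧ w = w' ∧ v = v' := by
  obtain ⟨rfl, hu, hv⟩ := h
  obtain ⟨hc, hu', hv'⟩ := h'
  have huu' : u = u' := hu.eq_of_prefix hu' ((prefix_append u w).trans (prefix_append _ v))
    (hc ▸ (prefix_append u' w').trans (prefix_append _ v'))
  have hvv' : v = v' := hv.eq_of_suffix hv' (suffix_append _ v) (hc ▸ suffix_append _ v')
  subst huu' hvv'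
  exact ⟨rfl, by simpa using hc, rfl⟩

theorem exists_isWindowSplit_of_compContains (h : CompContains (P ++ R ++ Q) c) :
    ∃ u w v, IsWindowSplit P Q c u w v ∧ CompContains R w := by
  obtain ⟨c₁₂, c₃, rfl, h₁₂, h₃⟩ := compContains_append_iff.1 h
  obtain ⟨c₁, c₂, rfl, h₁, h₂⟩ := compContains_append_iff.1 h₁₂
  obtain ⟨u, ⟨a, rfl⟩, hu⟩ := exists_isMinPrefix h₁
  obtain ⟨v, ⟨b, rfl⟩, hv⟩ := exists_isMinSuffix h₃
  refine ⟨u, a ++ c₂ ++ b, v, ⟨by simp, hu, hv⟩, CompContains.mono h₂ ?_⟩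
  exact (sublist_append_right a c₂).trans (sublist_append_left _ b)

theorem IsWindowSplit.compContains_iff (h : IsWindowSplit P Q c u w v) :
    CompContains (P ++ R ++ Q) c ↔ CompContains R w := by
  constructor
  · intro hc
    obtain ⟨u', w', v', h', hR⟩ := exists_isWindowSplit_of_compContains hc
    rwa [(h.unique h').2.1]
  · intro hR
    rw [h.1]
    exact compContains_append_iff.2
      ⟨u ++ w, v, rfl, compContains_append_iff.2 ⟨u, w, rfl, h.2.1.1, hR⟩, h.2.2.1⟩

open scoped Classical in
noncomputable def replaceWindow (P Q : List ℕ) (f : List ℕ → List ℕ) (c : List ℕ) : List ℕ :=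
  if h : ∃ u w v, IsWindowSplit P Q c u w v then
    h.choose ++ f h.choose_spec.choose ++ h.choose_spec.choose_spec.choose
  else c

theorem IsWindowSplit.replaceWindow_eq (h : IsWindowSplit P Q c u w v) (f : List ℕ → List ℕ) :
    replaceWindow P Q f c = u ++ f w ++ v := by
  have hex : ∃ u w v, IsWindowSplit P Q c u w v := ⟨u, w, v, h⟩
  obtain ⟨rfl, rfl, rfl⟩ := hex.choose_spec.choose_spec.choose_spec.unique h
  exact dif_pos hex

theorem replaceWindow_of_not_exists (h : ¬ ∃ u w v, IsWindowSplit P Q c u w v)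
    (f : List ℕ → List ℕ) : replaceWindow P Q f c = c :=
  dif_neg h

end Window

def TransfersAvoiders (R S : List ℕ) (f g : List ℕ → List ℕ) : Prop :=
  ∀ w, (∀ x ∈ w, 0 < x) → ¬ CompContains R w →
    (∀ x ∈ f w, 0 < x) ∧ (f w).sum = w.sum ∧ ¬ CompContains S (f w) ∧ g (f w) = w

theorem TransfersAvoiders.replaceWindow {R S : List ℕ} {f g : List ℕ → List ℕ}
    (h : TransfersAvoiders R S f g) (P Q : List ℕ) :
    TransfersAvoiders (P ++ R ++ Q) (P ++ S ++ Q) (replaceWindow P Q f) (replaceWindow P Q g) := by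
  intro c hc hav
  by_cases hex : ∃ u w v, IsWindowSplit P Q c u w v
  · obtain ⟨u, w, v, hs⟩ := hex
    have hw : ∀ x ∈ w, 0 < x := fun x hx => hc x (by simp [hs.1, hx])
    obtain ⟨hfpos, hfsum, hfav, hgf⟩ := h w hw (hs.compContains_iff.not.1 hav)
    have hs' := hs.replace (f w)
    rw [hs.replaceWindow_eq, hs'.replaceWindow_eq, hgf, ← hs.1]
    refine ⟨?_, ?_, hs'.compContains_iff.not.2 hfav, rfl⟩
    · simp only [hs.1, mem_append] at hc ⊢
      rintro x ((hx | hx) | hx)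
      exacts [hc x (.inl (.inl hx)), hfpos x hx, hc x (.inr hx)]
    · simp [hs.1, hfsum]
  · rw [replaceWindow_of_not_exists hex, replaceWindow_of_not_exists hex]
    refine ⟨hc, rfl, fun hS => hex ?_, rfl⟩
    obtain ⟨u, w, v, hs, -⟩ := exists_isWindowSplit_of_compContains hS
    exact ⟨u, w, v, hs⟩

theorem TransfersAvoiders.natCard_eq {A B : List ℕ} {f g : List ℕ → List ℕ}
    (hf : TransfersAvoiders A B f g) (hg : TransfersAvoiders B A g f) (n : ℕ) :
    Nat.card {c : List ℕ // (∀ x ∈ c, 0 < x) ∧ c.sum = n ∧ ¬ CompContains A c} =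
    Nat.card {c : List ℕ // (∀ x ∈ c, 0 < x) ∧ c.sum = n ∧ ¬ CompContains B c} :=
  Nat.card_congr
    { toFun := fun ⟨c, hpos, hsum, hav⟩ =>
        have h := hf c hpos hav
        ⟨f c, h.1, h.2.1.trans hsum, h.2.2.1⟩
      invFun := fun ⟨c, hpos, hsum, hav⟩ =>
        have h := hg c hpos hav
        ⟨g c, h.1, h.2.1.trans hsum, h.2.2.1⟩
      left_inv := fun ⟨c, hpos, _, hav⟩ => Subtype.ext (hf c hpos hav).2.2.2
      right_inv := fun ⟨c, hpos, _, hav⟩ => Subtype.ext (hg c hpos hav).2.2.2 }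

theorem compContains_singleton_iff {a : ℕ} {w : List ℕ} :
    CompContains [a] w ↔ ∃ x ∈ w, a ≤ x := by
  constructor
  · rintro ⟨s, hs, h⟩
    obtain _ | ⟨hax, _ | _⟩ := h
    exact ⟨_, singleton_sublist.1 hs, hax⟩
  · rintro ⟨x, hx, hax⟩
    exact ⟨[x], singleton_sublist.2 hx, .cons hax .nil⟩

theorem compContains_one_one_iff {w : List ℕ} (hw : ∀ x ∈ w, 0 < x) :
    CompContains [1, 1] w ↔ 2 ≤ w.length := by
  constructor
  · rintro ⟨s, hs, h⟩
    simpa [← h.length_eq] using hs.length_le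
  · intro h
    match w, hw, h with
    | a :: b :: w, hw, _ =>
      refine ⟨[a, b], ((nil_sublist w).cons_cons b).cons_cons a, ?_⟩
      exact .cons (hw a (by simp)) (.cons (hw b (by simp)) .nil)

def splitIntoOnes (w : List ℕ) : List ℕ := replicate w.sum 1

def mergeIntoOne (w : List ℕ) : List ℕ := if w = [] then [] else [w.sum]

theorem transfersAvoiders_one_one_two :
    TransfersAvoiders [1, 1] [2] splitIntoOnes mergeIntoOne := by
  intro w hw hav
  rw [compContains_one_one_iff hw, not_le] at hav
  match w, hw, hav with
  | [], _, _ => simp [splitIntoOnes, mergeIntoOne, compContains_singleton_iff]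
  | [a], hw, _ =>
    have ha : 0 < a := hw a (mem_singleton_self a)
    simp [splitIntoOnes, mergeIntoOne, compContains_singleton_iff, ha.ne']

theorem transfersAvoiders_two_one_one :
    TransfersAvoiders [2] [1, 1] mergeIntoOne splitIntoOnes := by
  intro w hw hav
  simp only [compContains_singleton_iff, not_exists, not_and, not_le] at hav
  have hones : w = replicate w.length 1 :=
    eq_replicate_iff.2 ⟨rfl, fun x hx => by have := hw x hx; have := hav x hx; omega⟩
  generalize w.length = m at hones
  subst hones
  rcases m with _ | m <;> simp [splitIntoOnes, mergeIntoOne, compContains_one_one_iff]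

end CompMerge

theorem comp_merge_wilf_general (P Q : List ℕ)
    (n : ℕ) :
    Nat.card {c : List ℕ // (∀ x ∈ c, 0 < x) ∧ c.sum = n ∧
        ¬ CompContains (P ++ [1, 1] ++ Q) c} =
    Nat.card {c : List ℕ // (∀ x ∈ c, 0 < x) ∧ c.sum = n ∧
        ¬ CompContains (P ++ [2] ++ Q) c} :=
  (CompMerge.transfersAvoiders_one_one_two.replaceWindow P Q).natCard_eq
    (CompMerge.transfersAvoiders_two_one_one.replaceWindow P Q) n

/-- Replacing adjacent parts `1, 1` of a forbidden composition pattern by a single part `2`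
preserves the number of compositions of `n` avoiding it. -/
theorem comp_merge_wilf (P Q : List ℕ) (hP : ∀ x ∈ P, 0 < x) (hQ : ∀ x ∈ Q, 0 < x)
    (n : ℕ) :
    Nat.card {c : List ℕ // (∀ x ∈ c, 0 < x) ∧ c.sum = n ∧
        ¬ CompContains (P ++ [1, 1] ++ Q) c} =
    Nat.card {c : List ℕ // (∀ x ∈ c, 0 < x) ∧ c.sum = n ∧
        ¬ CompContains (P ++ [2] ++ Q) c} :=
  comp_merge_wilf_general P Q n
end

section
/- Let a be a positive integer and B a composition. For a composition A let F_A denote the formal power series over ℚ whose n-th coefficient is the number of compositions of n avoiding A. Then (1 − X)·(1 − X − X² − ⋯ − X^{a−1})·F_{a::B} = (1 − X) + X^a·F_B, where a::B denotes the composition obtained by prepending the part a to B (for a = 1 the factor 1 − X − ⋯ − X^{a−1} is just 1). -/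
/-- The generating function (over ℚ) of compositions avoiding `A`. -/
noncomputable def Fcomp (A : List ℕ) : PowerSeries ℚ :=
  PowerSeries.mk fun n =>
    (Nat.card {c : List ℕ // (∀ x ∈ c, 0 < x) ∧ c.sum = n ∧ ¬ CompContains A c} : ℚ)

/-!
A nonempty composition avoiding `a :: B` is a first part `h` followed by a composition that avoids
`a :: B` if `h < a` (the part `h` is useless for an occurrence) and avoids `B` if `h ≥ a` (an
occurrence may as well match `a` with `h`). Hence
`F_{a::B} = 1 + (X + ⋯ + X^{a-1}) F_{a::B} + X^a/(1 - X) F_B`; multiply by `1 - X`.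
-/

open Finset PowerSeries

theorem compContains_nil_right_iff {A : List ℕ} : CompContains A [] ↔ A = [] := by
  refine ⟨fun ⟨s, hs, hA⟩ => ?_, by rintro rfl; exact ⟨[], .slnil, .nil⟩⟩
  rw [List.sublist_nil] at hs
  exact List.forall₂_nil_right_iff.mp (hs ▸ hA)

theorem CompContains.of_cons {x : ℕ} {A t : List ℕ} (h : CompContains (x :: A) t) :
    CompContains A t := by
  obtain ⟨s, hs, hf⟩ := h
  obtain ⟨b, u, -, hAu, rfl⟩ := List.forall₂_cons_left_iff.mp hf
  exact ⟨u, (List.sublist_cons_self b u).trans hs, hAu⟩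

theorem compContains_cons_cons_iff {x h : ℕ} {A t : List ℕ} :
    CompContains (x :: A) (h :: t) ↔ x ≤ h ∧ CompContains A t ∨ CompContains (x :: A) t := by
  constructor
  · rintro ⟨s, hs, hf⟩
    rcases List.sublist_cons_iff.mp hs with hs | ⟨r, rfl, hr⟩
    · exact .inr ⟨s, hs, hf⟩
    · obtain ⟨hxh, hAr⟩ := List.forall₂_cons.mp hf
      exact .inl ⟨hxh, r, hr, hAr⟩
  · rintro (⟨hxh, s, hs, hf⟩ | ⟨s, hs, hf⟩)
    · exact ⟨h :: s, hs.cons_cons h, .cons hxh hf⟩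
    · exact ⟨s, hs.cons h, hf⟩

theorem compContains_cons_cons_iff_ite {a h : ℕ} {B t : List ℕ} :
    CompContains (a :: B) (h :: t) ↔ CompContains (if h < a then a :: B else B) t := by
  rw [compContains_cons_cons_iff]
  split_ifs with hha
  · exact ⟨fun h' => h'.resolve_left (fun hle => by omega), .inr⟩
  · exact ⟨fun h' => h'.elim And.right CompContains.of_cons, fun h' => .inl ⟨by omega, h'⟩⟩

noncomputable def compCount (P : List ℕ → Prop) (n : ℕ) : ℕ :=
  Nat.card {c : List ℕ // (∀ x ∈ c, 0 < x) ∧ c.sum = n ∧ P c}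

instance (P : List ℕ → Prop) (n : ℕ) :
    Finite {c : List ℕ // (∀ x ∈ c, 0 < x) ∧ c.sum = n ∧ P c} :=
  Finite.of_injective (fun c => (⟨c.1, c.2.1 _, c.2.2.1⟩ : Composition n))
    fun _ _ h => Subtype.ext (congrArg Composition.blocks h)

theorem compCount_zero {P : List ℕ → Prop} (h : P []) : compCount P 0 = 1 := by
  rw [compCount, Nat.card_eq_one_iff_exists]
  refine ⟨⟨[], by simp, rfl, h⟩, fun ⟨c, hpos, hsum, _⟩ => Subtype.ext ?_⟩
  cases c with
  | nil => rfl
  | cons x t => have := hpos x (by simp); simp at hsum; omega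

theorem compCount_eq_sum {P : List ℕ → Prop} {n : ℕ} (hn : 0 < n) :
    compCount P n = ∑ h ∈ Icc 1 n, compCount (fun t => P (h :: t)) (n - h) := by
  let cons : (Σ h : Icc 1 n,
      {t : List ℕ // (∀ x ∈ t, 0 < x) ∧ t.sum = n - h ∧ P (h :: t)}) →
      {c : List ℕ // (∀ x ∈ c, 0 < x) ∧ c.sum = n ∧ P c} := fun p =>
    ⟨p.1.1 :: p.2.1, by
      obtain ⟨⟨h, hh⟩, ⟨t, hpos, hsum, hP⟩⟩ := p
      rw [mem_Icc] at hh
      refine ⟨?_, ?_, hP⟩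
      · simpa [List.forall_mem_cons] using ⟨by omega, hpos⟩
      · simp only [List.sum_cons] at hsum ⊢; omega⟩
  have hcons : cons.Bijective := by
    refine ⟨?_, ?_⟩
    · rintro ⟨⟨h, _⟩, ⟨t, _⟩⟩ ⟨⟨h', _⟩, ⟨t', _⟩⟩ heq
      obtain ⟨rfl, rfl⟩ := List.cons.inj (congrArg Subtype.val heq)
      rfl
    · rintro ⟨_ | ⟨h, t⟩, hpos, hsum, hP⟩
      · simp at hsum; omega
      · have := hpos h (by simp)
        simp only [List.sum_cons] at hsum
        exact ⟨⟨⟨h, mem_Icc.mpr (by omega)⟩,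
          ⟨t, fun x hx => hpos x (List.mem_cons_of_mem _ hx),
            show t.sum = n - h by omega, hP⟩⟩, rfl⟩
  rw [compCount, ← Nat.card_eq_of_bijective cons hcons, Nat.card_sigma]
  exact sum_coe_sort (Icc 1 n) fun h => compCount (fun t => P (h :: t)) (n - h)

theorem coeff_Fcomp (A : List ℕ) (n : ℕ) :
    coeff n (Fcomp A) = compCount (¬ CompContains A ·) n :=
  coeff_mk _ _

theorem coeff_Fcomp_cons {a : ℕ} (B : List ℕ) {n : ℕ} (hn : 0 < n) :
    coeff n (Fcomp (a :: B)) =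
      ∑ h ∈ Icc 1 n, if h < a then coeff (n - h) (Fcomp (a :: B)) else coeff (n - h) (Fcomp B) := by
  simp only [coeff_Fcomp, compCount_eq_sum hn, compContains_cons_cons_iff_ite, Nat.cast_sum]
  refine sum_congr rfl fun h _ => ?_
  split_ifs <;> rfl

/-- The series `X ^ a / (1 - X)`. -/
noncomputable def geomFrom (R : Type*) [Semiring R] (a : ℕ) : PowerSeries R :=
  mk fun n => if a ≤ n then 1 else 0

theorem one_sub_X_mul_geomFrom {R : Type*} [Ring R] (a : ℕ) :
    (1 - X) * geomFrom R a = X ^ a := by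
  ext n
  rw [sub_mul, one_mul, map_sub, coeff_X_pow, ← pow_one X, coeff_X_pow_mul']
  simp only [geomFrom, coeff_mk]
  split_ifs <;> first | omega | simp

theorem coeff_geomFrom_mul {R : Type*} [Semiring R] (a n : ℕ) (F : PowerSeries R) :
    coeff n (geomFrom R a * F) = ∑ h ∈ Icc a n, coeff (n - h) F := by
  have : Icc a n = {h ∈ range (n + 1) | a ≤ h} := by ext; simp; omega
  rw [coeff_mul, Nat.sum_antidiagonal_eq_sum_range_succ_mk, this, sum_filter]
  simp [geomFrom]

theorem coeff_sum_X_pow_mul {R : Type*} [Semiring R] (s : Finset ℕ) (n : ℕ) (F : PowerSeries R) :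
    coeff n ((∑ h ∈ s, X ^ h) * F) = ∑ h ∈ s with h ≤ n, coeff (n - h) F := by
  simp [sum_mul, coeff_X_pow_mul', sum_filter]

theorem Fcomp_cons_eq {a : ℕ} (ha : 0 < a) (B : List ℕ) :
    Fcomp (a :: B) =
      1 + (∑ h ∈ Icc 1 (a - 1), X ^ h) * Fcomp (a :: B) + geomFrom ℚ a * Fcomp B := by
  ext n
  rw [map_add, map_add, coeff_sum_X_pow_mul, coeff_geomFrom_mul, coeff_one]
  rcases Nat.eq_zero_or_pos n with rfl | hn
  · have hlow : {h ∈ Icc 1 (a - 1) | h ≤ 0} = ∅ := by ext; simp; omega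
    rw [hlow, Icc_eq_empty_of_lt ha, coeff_Fcomp,
      compCount_zero (by simp [compContains_nil_right_iff])]
    simp
  · have hlow : {h ∈ Icc 1 n | h < a} = {h ∈ Icc 1 (a - 1) | h ≤ n} := by ext; simp; omega
    have hhigh : {h ∈ Icc 1 n | ¬ h < a} = Icc a n := by ext; simp; omega
    rw [coeff_Fcomp_cons B hn, sum_ite, hlow, hhigh, if_neg hn.ne', zero_add]

theorem comp_gf_recurrence_general (a : ℕ) (ha : 0 < a) (B : List ℕ) :
    (1 - PowerSeries.X) * (1 - ∑ i ∈ Finset.Icc 1 (a - 1), (PowerSeries.X : PowerSeries ℚ) ^ i)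
        * Fcomp (a :: B)
      = (1 - PowerSeries.X) + PowerSeries.X ^ a * Fcomp B := by
  linear_combination (1 - X) * Fcomp_cons_eq ha B + Fcomp B * one_sub_X_mul_geomFrom (R := ℚ) a

/-- The functional equation
`(1 − X)(1 − X − ⋯ − X^{a−1}) F_{a::B} = (1 − X) + X^a F_B`. -/
theorem comp_gf_recurrence (a : ℕ) (ha : 0 < a) (B : List ℕ) (hB : ∀ x ∈ B, 0 < x) :
    (1 - PowerSeries.X) * (1 - ∑ i ∈ Finset.Icc 1 (a - 1), (PowerSeries.X : PowerSeries ℚ) ^ i)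
        * Fcomp (a :: B)
      = (1 - PowerSeries.X) + PowerSeries.X ^ a * Fcomp B :=
  comp_gf_recurrence_general a ha B
end

section
/- Let a be a positive integer and A, B compositions. Write f_C(n) for the number of compositions of n avoiding the composition C. Then f_{a::A}(n) = f_{a::B}(n) for all n if and only if f_A(n) = f_B(n) for all n, where a::A denotes the composition obtained by prepending the part a to A. -/
open Finset

noncomputable def avoidCount (C : List ℕ) (n : ℕ) : ℕ :=
  Nat.card {c : List ℕ // (∀ x ∈ c, 0 < x) ∧ c.sum = n ∧ ¬ CompContains C c}

section Containment

variable {a m : ℕ} {A q : List ℕ}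

theorem compContains_cons_cons_iff_s7 :
    CompContains (a :: A) (m :: q) ↔ (a ≤ m ∧ CompContains A q) ∨ CompContains (a :: A) q := by
  constructor
  · rintro ⟨s, hs, hf⟩
    cases hf with
    | cons hle hf' =>
      cases hs with
      | cons _ hs' => exact Or.inr ⟨_, hs', .cons hle hf'⟩
      | cons_cons _ hs' => exact Or.inl ⟨hle, _, hs', hf'⟩
  · rintro (⟨ham, s, hs, hf⟩ | ⟨s, hs, hf⟩)
    · exact ⟨m :: s, hs.cons_cons m, .cons ham hf⟩
    · exact ⟨s, hs.cons m, hf⟩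

theorem CompContains.of_cons_s7 (h : CompContains (a :: A) q) : CompContains A q := by
  obtain ⟨s, hs, hf⟩ := h
  cases hf with
  | cons _ hf' => exact ⟨_, (List.sublist_cons_self _ _).trans hs, hf'⟩

theorem compContains_cons_cons_iff_of_lt (h : m < a) :
    CompContains (a :: A) (m :: q) ↔ CompContains (a :: A) q := by
  rw [compContains_cons_cons_iff_s7]
  exact ⟨fun h' => h'.resolve_left (by omega), Or.inr⟩

theorem compContains_cons_cons_iff_of_le (h : a ≤ m) :
    CompContains (a :: A) (m :: q) ↔ CompContains A q := by
  rw [compContains_cons_cons_iff_s7]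
  exact ⟨fun h' => h'.elim And.right CompContains.of_cons_s7, fun h' => Or.inl ⟨h, h'⟩⟩

end Containment

section Counting

instance finite_compositions (n : ℕ) (P : List ℕ → Prop) :
    Finite {c : List ℕ // (∀ x ∈ c, 0 < x) ∧ c.sum = n ∧ P c} :=
  Finite.of_injective
    (fun c => (⟨c.1, fun hi => c.2.1 _ hi, c.2.2.1⟩ : Composition n))
    fun _ _ h => Subtype.ext (congrArg Composition.blocks h)

theorem card_compositions_succ (n : ℕ) (P : List ℕ → Prop) :
    Nat.card {c : List ℕ // (∀ x ∈ c, 0 < x) ∧ c.sum = n + 1 ∧ P c} =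
      ∑ m ∈ range (n + 1),
        Nat.card {q : List ℕ // (∀ x ∈ q, 0 < x) ∧ q.sum = n - m ∧ P ((m + 1) :: q)} := by
  let cons (x : (m : Fin (n + 1)) ×
      {q : List ℕ // (∀ x ∈ q, 0 < x) ∧ q.sum = n - m ∧ P ((m + 1) :: q)}) :
      {c : List ℕ // (∀ x ∈ c, 0 < x) ∧ c.sum = n + 1 ∧ P c} :=
    ⟨(x.1 + 1) :: x.2.1, by
      obtain ⟨m, q, hpos, hsum, hP⟩ := x
      refine ⟨?_, ?_, hP⟩
      · simpa using hpos
      · have := m.2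
        simp only [List.sum_cons]
        omega⟩
  have hcons : Function.Bijective cons := by
    constructor
    · rintro ⟨m₁, q₁, h₁⟩ ⟨m₂, q₂, h₂⟩ h
      simp only [cons, Subtype.mk.injEq, List.cons.injEq, add_left_inj] at h
      obtain ⟨hm, rfl⟩ := h
      obtain rfl : m₁ = m₂ := Fin.ext hm
      rfl
    · rintro ⟨_ | ⟨x, q⟩, hpos, hsum, hP⟩
      · simp at hsum
      · have hx : 0 < x := hpos x List.mem_cons_self
        have hx' : x - 1 + 1 = x := by omega
        simp only [List.sum_cons] at hsum
        refine ⟨⟨⟨x - 1, by omega⟩, q, fun y hy => hpos y (List.mem_cons_of_mem x hy),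
          by simp only; omega, by rwa [hx']⟩, ?_⟩
        simp [cons, hx']
  rw [← Nat.card_congr (Equiv.ofBijective cons hcons), Nat.card_sigma,
    ← Fin.sum_univ_eq_sum_range]

theorem avoidCount_cons_zero (a : ℕ) (A : List ℕ) : avoidCount (a :: A) 0 = 1 := by
  have hnil : ∀ c : List ℕ, (∀ x ∈ c, 0 < x) → c.sum = 0 → c = [] := by
    intro c hpos hsum
    rw [List.sum_eq_zero_iff] at hsum
    exact List.eq_nil_iff_forall_not_mem.2 fun x hx => (hpos x hx).ne' (hsum x hx)
  refine Nat.card_eq_one_iff_exists.2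
    ⟨⟨[], by simp, rfl, fun ⟨s, hs, hf⟩ => ?_⟩, fun c => Subtype.ext (hnil c.1 c.2.1 c.2.2.1)⟩
  obtain rfl := List.sublist_nil.1 hs
  cases hf

theorem avoidCount_cons_succ (a : ℕ) (A : List ℕ) (n : ℕ) :
    avoidCount (a :: A) (n + 1) =
      ∑ m ∈ range (n + 1),
        if m + 1 < a then avoidCount (a :: A) (n - m) else avoidCount A (n - m) := by
  rw [avoidCount, card_compositions_succ]
  refine sum_congr rfl fun m _ => ?_
  split_ifs with hma
  · simp_rw [compContains_cons_cons_iff_of_lt hma]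
    rfl
  · simp_rw [compContains_cons_cons_iff_of_le (not_lt.1 hma)]
    rfl

end Counting

section Recursion

variable {b : ℕ} {g h : ℕ → ℕ}

theorem eq_sum_add_sum_range_of_recursion
    (hrec : ∀ n, h (n + 1) = ∑ m ∈ range (n + 1), if m + 1 < b + 1 then h (n - m) else g (n - m))
    (n : ℕ) :
    h (b + n + 1) = ∑ m ∈ range b, h (b + n - m) + ∑ j ∈ range (n + 1), g j := by
  rw [hrec, show b + n + 1 = b + (n + 1) by omega, sum_range_add, ← sum_range_reflect g]
  congr 1
  · exact sum_congr rfl fun m hm => if_pos (Nat.add_lt_add_right (mem_range.1 hm) 1)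
  · refine sum_congr rfl fun j _ => ?_
    rw [if_neg (by omega)]
    congr 1
    omega

theorem eq_iff_eq_of_recursion {a : ℕ} (ha : 0 < a) {g₁ g₂ h₁ h₂ : ℕ → ℕ} (h0 : h₁ 0 = h₂ 0)
    (hrec₁ : ∀ n, h₁ (n + 1) =
      ∑ m ∈ range (n + 1), if m + 1 < a then h₁ (n - m) else g₁ (n - m))
    (hrec₂ : ∀ n, h₂ (n + 1) =
      ∑ m ∈ range (n + 1), if m + 1 < a then h₂ (n - m) else g₂ (n - m)) :
    h₁ = h₂ ↔ g₁ = g₂ := by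
  obtain ⟨b, rfl⟩ := Nat.exists_eq_add_of_lt ha
  constructor
  · rintro rfl
    have hpartial (n : ℕ) : ∑ j ∈ range n, g₁ j = ∑ j ∈ range n, g₂ j := by
      cases n with
      | zero => rfl
      | succ n =>
        have := (eq_sum_add_sum_range_of_recursion hrec₁ n).symm.trans
          (eq_sum_add_sum_range_of_recursion hrec₂ n)
        exact Nat.add_left_cancel this
    funext n
    have := hpartial (n + 1)
    rwa [sum_range_succ, sum_range_succ, hpartial n, Nat.add_left_cancel_iff] at this
  · rintro rfl
    funext n
    induction n using Nat.strong_induction_on with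
    | _ n ih =>
      cases n with
      | zero => exact h0
      | succ n =>
        rw [hrec₁, hrec₂]
        refine sum_congr rfl fun m _ => ?_
        rw [ih (n - m) (by omega)]

end Recursion

theorem comp_cancel_first_part_general (a : ℕ) (ha : 0 < a) (A B : List ℕ) :
    (∀ n : ℕ,
        Nat.card {c : List ℕ // (∀ x ∈ c, 0 < x) ∧ c.sum = n ∧ ¬ CompContains (a :: A) c} =
        Nat.card {c : List ℕ // (∀ x ∈ c, 0 < x) ∧ c.sum = n ∧ ¬ CompContains (a :: B) c}) ↔
    (∀ n : ℕ,
        Nat.card {c : List ℕ // (∀ x ∈ c, 0 < x) ∧ c.sum = n ∧ ¬ CompContains A c} =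
        Nat.card {c : List ℕ // (∀ x ∈ c, 0 < x) ∧ c.sum = n ∧ ¬ CompContains B c}) := by
  have h0 : avoidCount (a :: A) 0 = avoidCount (a :: B) 0 :=
    (avoidCount_cons_zero a A).trans (avoidCount_cons_zero a B).symm
  simpa only [funext_iff, avoidCount] using
    eq_iff_eq_of_recursion ha h0 (avoidCount_cons_succ a A) (avoidCount_cons_succ a B)

/-- Cancellation of the first part: `a::A` and `a::B` are Wilf-equivalent composition
patterns iff `A` and `B` are. -/
theorem comp_cancel_first_part (a : ℕ) (ha : 0 < a) (A B : List ℕ)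
    (hA : ∀ x ∈ A, 0 < x) (hB : ∀ x ∈ B, 0 < x) :
    (∀ n : ℕ,
        Nat.card {c : List ℕ // (∀ x ∈ c, 0 < x) ∧ c.sum = n ∧ ¬ CompContains (a :: A) c} =
        Nat.card {c : List ℕ // (∀ x ∈ c, 0 < x) ∧ c.sum = n ∧ ¬ CompContains (a :: B) c}) ↔
    (∀ n : ℕ,
        Nat.card {c : List ℕ // (∀ x ∈ c, 0 < x) ∧ c.sum = n ∧ ¬ CompContains A c} =
        Nat.card {c : List ℕ // (∀ x ∈ c, 0 < x) ∧ c.sum = n ∧ ¬ CompContains B c}) :=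
  comp_cancel_first_part_general a ha A B
end

section
/- Let a > 2 be an integer and let r_a be the least positive real root of 1 − t − t² − ⋯ − t^{a−1} (such a root exists and lies in (0,1)). Let B be a nonempty weakly decreasing list of positive integers (a partition) all of whose parts are strictly less than a, and write f_B(n) for the number of compositions of n avoiding B. Then the series Σ_{n≥0} f_B(n)·r_a^n converges (equivalently, lim_{t→r_a⁻} Σ_n f_B(n) t^n exists and is finite). -/
open scoped ENNReal

lemma forall₂_le_take_length {α : Type*} [Preorder α] {B l : List α} {m : α}
    (hB : ∀ x ∈ B, x ≤ m) (hl : ∀ y ∈ l, m ≤ y) (hlen : B.length ≤ l.length) :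
    List.Forall₂ (· ≤ ·) B (l.take B.length) := by
  induction B generalizing l with
  | nil => simp
  | cons x B ih =>
    cases l with
    | nil => simp at hlen
    | cons y l =>
      simp only [List.mem_cons, forall_eq_or_imp, List.length_cons, Nat.add_le_add_iff_right,
        List.take_succ_cons, List.forall₂_cons] at hB hl hlen ⊢
      exact ⟨hB.1.trans hl.1, ih hB.2 hl.2 hlen⟩

lemma countP_le_lt_length_of_not_compContains {B c : List ℕ} {m : ℕ} (hB : ∀ x ∈ B, x ≤ m)
    (h : ¬ CompContains B c) : c.countP (m ≤ ·) < B.length := by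
  by_contra! hle
  rw [List.countP_eq_length_filter] at hle
  exact h ⟨_, (List.take_sublist _ _).trans List.filter_sublist,
    forall₂_le_take_length hB (fun y hy => by simpa using (List.mem_filter.1 hy).2) hle⟩

namespace ENNReal

theorem tsum_pi_fin_prod {α : Type*} (u : α → ℝ≥0∞) (n : ℕ) :
    ∑' v : Fin n → α, ∏ i, u (v i) = (∑' x, u x) ^ n := by
  induction n with
  | zero => simp
  | succ n ih =>
    rw [← (Fin.consEquiv fun _ => α).tsum_eq]
    simp only [Fin.consEquiv_apply, Fin.prod_univ_succ, Fin.cons_zero, Fin.cons_succ]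
    rw [ENNReal.tsum_prod']
    simp [ENNReal.tsum_mul_left, ENNReal.tsum_mul_right, ih, pow_succ']

theorem tsum_list_prod_map {α : Type*} (u : α → ℝ≥0∞) :
    ∑' l : List α, (l.map u).prod = ∑' n, (∑' x, u x) ^ n := by
  rw [← List.equivSigmaTuple.symm.tsum_eq, ENNReal.tsum_sigma']
  simp [List.equivSigmaTuple, List.map_ofFn, List.prod_ofFn, tsum_pi_fin_prod]

theorem natCard_mul_le_tsum (α : Type*) (c : ℝ≥0∞) :
    (Nat.card α : ℝ≥0∞) * c ≤ ∑' _ : α, c := by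
  rcases finite_or_infinite α with hα | hα
  · rw [ENNReal.tsum_const, ENat.card_eq_coe_natCard, ENat.toENNReal_coe]
  · simp [Nat.card_eq_zero_of_infinite]

theorem exists_ne_zero_le_one_add_mul_lt {S C : ℝ≥0∞} (hS : S < 1) (hC : C ≠ ∞) :
    ∃ ε : ℝ≥0∞, ε ≠ 0 ∧ ε ≤ 1 ∧ S + ε * C < 1 := by
  obtain ⟨δ, hδ0, hδ⟩ := ENNReal.exists_nnreal_pos_mul_lt hC (tsub_pos_of_lt hS).ne'
  refine ⟨min δ 1, by simpa using hδ0.ne', min_le_right _ _, ?_⟩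
  calc S + min (δ : ℝ≥0∞) 1 * C ≤ S + δ * C := by gcongr; exact min_le_left _ _
    _ < S + (1 - S) := ENNReal.add_lt_add_left (ne_top_of_lt hS) hδ
    _ = 1 := add_tsub_cancel_of_le hS.le

end ENNReal

abbrev CompositionsWith (P : List ℕ → Prop) (n : ℕ) : Type :=
  {c : List ℕ // (∀ x ∈ c, 0 < x) ∧ c.sum = n ∧ P c}

lemma injective_sigma_compositionsWith (P : List ℕ → Prop) :
    Function.Injective fun p : (Σ n, CompositionsWith P n) => p.2.val := by
  rintro ⟨n, c, hc⟩ ⟨n', c', hc'⟩ (rfl : c = c')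
  obtain rfl : n = n' := hc.2.1.symm.trans hc'.2.1
  rfl

theorem tsum_natCard_compositionsWith_mul_pow_le (P : List ℕ → Prop) (ρ : ℝ≥0∞)
    (w : List ℕ → ℝ≥0∞)
    (hw : ∀ c, (∀ x ∈ c, 0 < x) → P c → ρ ^ c.sum ≤ w c) :
    ∑' n, (Nat.card (CompositionsWith P n) : ℝ≥0∞) * ρ ^ n ≤ ∑' c, w c :=
  calc _ ≤ ∑' n, ∑' c : CompositionsWith P n, ρ ^ c.val.sum := by
        gcongr with n
        calc _ ≤ ∑' _ : CompositionsWith P n, ρ ^ n := ENNReal.natCard_mul_le_tsum _ _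
          _ = _ := tsum_congr fun c => by rw [c.2.2.1]
    _ = ∑' p : (Σ n, CompositionsWith P n), ρ ^ p.2.val.sum :=
        (ENNReal.tsum_sigma' fun p : Σ n, CompositionsWith P n => ρ ^ p.2.val.sum).symm
    _ ≤ ∑' p : (Σ n, CompositionsWith P n), w p.2.val :=
        ENNReal.tsum_le_tsum fun p => hw _ p.2.2.1 p.2.2.2.2
    _ ≤ _ := ENNReal.tsum_comp_le_tsum_of_injective (injective_sigma_compositionsWith P) w

noncomputable def largePartWeight (m : ℕ) (ρ ε : ℝ≥0∞) (x : ℕ) : ℝ≥0∞ :=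
  (Set.Ico 1 m).indicator (ρ ^ ·) x + ε * ρ ^ x

lemma tsum_largePartWeight (m : ℕ) (ρ ε : ℝ≥0∞) :
    ∑' x, largePartWeight m ρ ε x = ∑ i ∈ Finset.Ico 1 m, ρ ^ i + ε * (1 - ρ)⁻¹ := by
  unfold largePartWeight
  rw [ENNReal.tsum_add, ENNReal.tsum_mul_left, ENNReal.tsum_geometric,
    sum_eq_tsum_indicator, Finset.coe_Ico]

lemma pow_countP_mul_pow_sum_le_prod_map_largePartWeight {m : ℕ} {ρ ε : ℝ≥0∞}
    {c : List ℕ} (hc : ∀ x ∈ c, 0 < x) :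
    ε ^ c.countP (m ≤ ·) * ρ ^ c.sum ≤ (c.map (largePartWeight m ρ ε)).prod := by
  induction c with
  | nil => simp
  | cons x c ih =>
    simp only [List.mem_cons, forall_eq_or_imp] at hc
    have hx : (if m ≤ x then ε else 1) * ρ ^ x ≤ largePartWeight m ρ ε x := by
      split_ifs with hmx
      · exact le_add_self
      · have hxm : x ∈ Set.Ico 1 m := ⟨hc.1, not_le.1 hmx⟩
        rw [largePartWeight, Set.indicator_of_mem hxm, one_mul]
        exact le_self_add
    calc _ = ((if m ≤ x then ε else 1) * ρ ^ x) * (ε ^ c.countP (m ≤ ·) * ρ ^ c.sum) := by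
          simp only [List.countP_cons, List.sum_cons, pow_add]
          split_ifs <;> simp_all <;> ring
      _ ≤ _ := mul_le_mul' hx (ih hc.2)

theorem tsum_natCard_compositionsWith_mul_pow_ne_top (P : List ℕ → Prop) {m k : ℕ}
    (hP : ∀ c, P c → c.countP (m ≤ ·) ≤ k) {ρ : ℝ≥0∞} (hρ : ρ < 1)
    (hsmall : ∑ i ∈ Finset.Ico 1 m, ρ ^ i < 1) :
    ∑' n : ℕ, (Nat.card (CompositionsWith P n) : ℝ≥0∞) * ρ ^ n ≠ ∞ := by
  obtain ⟨ε, hε0, hε1, hε⟩ :=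
    ENNReal.exists_ne_zero_le_one_add_mul_lt hsmall
      (ENNReal.inv_ne_top.2 (tsub_pos_of_lt hρ).ne')
  set w := largePartWeight m ρ ε
  have hεk : ε ^ k ≠ 0 := pow_ne_zero _ hε0
  have hweight (c : List ℕ) (hpos : ∀ x ∈ c, 0 < x) (hc : P c) :
      ρ ^ c.sum ≤ (ε ^ k)⁻¹ * (c.map w).prod := by
    have hεk_top : ε ^ k ≠ ∞ :=
      ENNReal.pow_ne_top (ne_top_of_le_ne_top ENNReal.one_ne_top hε1)
    rw [← ENNReal.mul_le_iff_le_inv hεk hεk_top]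
    exact (mul_le_mul_left (pow_le_pow_right_of_le_one' hε1 (hP c hc)) _).trans
      (pow_countP_mul_pow_sum_le_prod_map_largePartWeight hpos)
  refine (lt_of_le_of_lt (tsum_natCard_compositionsWith_mul_pow_le P ρ _ hweight) ?_).ne
  rw [ENNReal.tsum_mul_left, ENNReal.tsum_list_prod_map, ENNReal.tsum_geometric,
    tsum_largePartWeight]
  exact ENNReal.mul_lt_top (ENNReal.inv_lt_top.2 (pos_iff_ne_zero.2 hεk))
    (ENNReal.inv_lt_top.2 (tsub_pos_of_lt hε))

theorem summable_natCard_compositionsWith_mul_pow (P : List ℕ → Prop) {m k : ℕ}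
    (hP : ∀ c, P c → c.countP (m ≤ ·) ≤ k) {r : ℝ} (hr0 : 0 ≤ r) (hr1 : r < 1)
    (hsmall : ∑ i ∈ Finset.Ico 1 m, r ^ i < 1) :
    Summable fun n : ℕ => (Nat.card (CompositionsWith P n) : ℝ) * r ^ n := by
  have hsmall' : ∑ i ∈ Finset.Ico 1 m, ENNReal.ofReal r ^ i < 1 := by
    simp_rw [← ENNReal.ofReal_pow hr0]
    rw [← ENNReal.ofReal_sum_of_nonneg fun i _ => by positivity]
    exact ENNReal.ofReal_lt_one.2 hsmall
  simpa [ENNReal.toReal_ofReal hr0] using ENNReal.summable_toReal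
    (tsum_natCard_compositionsWith_mul_pow_ne_top P hP (ENNReal.ofReal_lt_one.2 hr1) hsmall')

theorem comp_gf_converges_general (a : ℕ) (ha : 2 < a) (r : ℝ) (hr0 : 0 < r) (hr1 : r < 1)
    (hroot : 1 - ∑ i ∈ Finset.Icc 1 (a - 1), r ^ i = 0)
    (B : List ℕ) (hBlt : ∀ x ∈ B, x < a) :
    Summable (fun n : ℕ =>
      (Nat.card {c : List ℕ // (∀ x ∈ c, 0 < x) ∧ c.sum = n ∧ ¬ CompContains B c} : ℝ)
        * r ^ n) := by
  have hB : ∀ x ∈ B, x ≤ a - 1 := fun x hx => Nat.le_sub_one_of_lt (hBlt x hx)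
  have hsplit : ∑ i ∈ Finset.Icc 1 (a - 1), r ^ i =
      ∑ i ∈ Finset.Ico 1 (a - 1), r ^ i + r ^ (a - 1) := by
    rw [← Finset.Ico_add_one_right_eq_Icc, Finset.sum_Ico_succ_top (by omega)]
  exact summable_natCard_compositionsWith_mul_pow (fun c => ¬ CompContains B c)
    (fun c hc => (countP_le_lt_length_of_not_compContains hB hc).le) hr0.le hr1
    (by linarith [pow_pos hr0 (a - 1)])

/-- If `a > 2`, `r_a` is the least positive root of `1 − t − ⋯ − t^{a−1}` (which lies in
`(0,1)`), and `B` is a nonempty partition with all parts `< a`, then the generating function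
of compositions avoiding `B` converges at `r_a`. -/
theorem comp_gf_converges (a : ℕ) (ha : 2 < a) (r : ℝ) (hr0 : 0 < r) (hr1 : r < 1)
    (hroot : 1 - ∑ i ∈ Finset.Icc 1 (a - 1), r ^ i = 0)
    (hleast : ∀ s : ℝ, 0 < s → 1 - ∑ i ∈ Finset.Icc 1 (a - 1), s ^ i = 0 → r ≤ s)
    (B : List ℕ) (hBne : B ≠ []) (hBdec : B.Pairwise (· ≥ ·))
    (hBpos : ∀ x ∈ B, 0 < x) (hBlt : ∀ x ∈ B, x < a) :
    Summable (fun n : ℕ =>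
      (Nat.card {c : List ℕ // (∀ x ∈ c, 0 < x) ∧ c.sum = n ∧ ¬ CompContains B c} : ℝ)
        * r ^ n) :=
  comp_gf_converges_general a ha r hr0 hr1 hroot B hBlt
end

section
/- Let a > 2 be an integer and let r_a be the least positive real root of 1 − t − t² − ⋯ − t^{a−1}. Let A be a weakly decreasing list of positive integers (a partition) whose first (greatest) part equals a, and write f_A(n) for the number of compositions of n avoiding A. Then Σ_{n≥0} f_A(n) t^n (interpreted as a sum in [0,∞]) tends to ∞ as t tends to r_a from below. -/
open Filter Topology
open scoped ENNReal

lemma not_compContains_of_forall_lt {a : ℕ} {A c : List ℕ} (hhead : A.head? = some a)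
    (hc : ∀ x ∈ c, x < a) : ¬ CompContains A c := by
  rintro ⟨s, hsub, hle⟩
  obtain ⟨A', rfl⟩ : ∃ A', A = a :: A' := ⟨A.tail, List.eq_cons_of_mem_head? hhead⟩
  obtain ⟨b, s', hab, -, rfl⟩ := List.forall₂_cons_left_iff.mp hle
  exact (hc b (hsub.subset List.mem_cons_self)).not_ge hab

lemma finite_sum_eq_of_forall_pos (Q : List ℕ → Prop) (n : ℕ) :
    Finite {c : {c : List ℕ // (∀ x ∈ c, 0 < x) ∧ Q c} // c.1.sum = n} :=
  Finite.of_injective (fun c => (⟨c.1.1, fun hx => c.1.2.1 _ hx, c.2⟩ : Composition n))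
    fun _ _ h => Subtype.ext (Subtype.ext (congrArg Composition.blocks h))

namespace ENNReal

lemma tsum_comp_eq_tsum_card_fiber_mul {α : Type*} (f : α → ℕ)
    (hf : ∀ n, Finite {a // f a = n}) (w : ℕ → ℝ≥0∞) :
    ∑' a, w (f a) = ∑' n, (Nat.card {a // f a = n} : ℝ≥0∞) * w n := by
  rw [← (Equiv.sigmaFiberEquiv f).tsum_eq, ENNReal.tsum_sigma']
  refine tsum_congr fun n => ?_
  have := Fintype.ofFinite {a // f a = n}
  calc ∑' b : {a // f a = n}, w (f b) = ∑' _ : {a // f a = n}, w n :=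
        tsum_congr fun b => by rw [b.2]
    _ = _ := by rw [tsum_fintype, Finset.sum_const, nsmul_eq_mul, Finset.card_univ,
        Nat.card_eq_fintype_card]

lemma tsum_list_prod_map_s9 {β : Type*} [Fintype β] (w : β → ℝ≥0∞) :
    ∑' l : List β, (l.map w).prod = (1 - ∑ b, w b)⁻¹ := by
  classical
  rw [← tsum_geometric, ← List.equivSigmaTuple.symm.tsum_eq, ENNReal.tsum_sigma']
  refine tsum_congr fun k => ?_
  rw [tsum_fintype, ← Fin.prod_const, Fintype.prod_sum]
  simp [List.equivSigmaTuple, List.prod_ofFn]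

end ENNReal

lemma inv_one_sub_sum_pow_le_tsum_card_avoiding {a : ℕ} {A : List ℕ}
    (hhead : A.head? = some a) (x : ℝ≥0∞) :
    (1 - ∑ i ∈ Finset.Icc 1 (a - 1), x ^ i)⁻¹ ≤ ∑' n : ℕ,
      (Nat.card {c : List ℕ // (∀ y ∈ c, 0 < y) ∧ c.sum = n ∧ ¬ CompContains A c} : ℝ≥0∞)
        * x ^ n := by
  set I := Finset.Icc 1 (a - 1)
  let T := {c : List ℕ // (∀ y ∈ c, 0 < y) ∧ ¬ CompContains A c}
  have hcard (n : ℕ) :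
      Nat.card {c : List ℕ // (∀ y ∈ c, 0 < y) ∧ c.sum = n ∧ ¬ CompContains A c}
        = Nat.card {c : T // c.1.sum = n} :=
    Nat.card_congr ((Equiv.subtypeSubtypeEquivSubtypeInter
      (fun c : List ℕ => (∀ y ∈ c, 0 < y) ∧ ¬ CompContains A c) (·.sum = n)).trans
      (Equiv.subtypeEquivRight fun _ => by tauto)).symm
  have hparts {l : List I} {y : ℕ} (hy : y ∈ l.map (↑)) : 0 < y ∧ y < a := by
    obtain ⟨i, -, rfl⟩ := List.mem_map.mp hy
    have := Finset.mem_Icc.mp i.2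
    omega
  let embed : List I → T := fun l =>
    ⟨l.map (↑), fun _ hy => (hparts hy).1,
      not_compContains_of_forall_lt hhead fun _ hy => (hparts hy).2⟩
  have hembed : Function.Injective embed := fun _ _ h =>
    List.map_injective_iff.mpr Subtype.val_injective (congrArg Subtype.val h)
  calc (1 - ∑ i ∈ I, x ^ i)⁻¹ = ∑' l : List I, (l.map fun i : I => x ^ (i : ℕ)).prod := by
        rw [ENNReal.tsum_list_prod_map_s9, Finset.sum_coe_sort]
    _ = ∑' l : List I, x ^ (embed l).1.sum := tsum_congr fun l => by
        induction l <;> simp_all [embed, pow_add]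
    _ ≤ ∑' c : T, x ^ c.1.sum := ENNReal.tsum_comp_le_tsum_of_injective hembed _
    _ = _ := by
        rw [ENNReal.tsum_comp_eq_tsum_card_fiber_mul _ (finite_sum_eq_of_forall_pos _)]
        exact tsum_congr fun n => by rw [hcard n]

lemma tendsto_inv_one_sub_sum_ofReal_pow {I : Finset ℕ} {r : ℝ} (hr : 0 ≤ r)
    (hroot : ∑ i ∈ I, r ^ i = 1) :
    Tendsto (fun t : ℝ => (1 - ∑ i ∈ I, ENNReal.ofReal t ^ i)⁻¹) (𝓝 r) (𝓝 ⊤) := by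
  have hsum : ∑ i ∈ I, ENNReal.ofReal r ^ i = 1 := by
    rw [← ENNReal.ofReal_one, ← hroot, ENNReal.ofReal_sum_of_nonneg fun i _ => pow_nonneg hr i]
    simp_rw [ENNReal.ofReal_pow hr]
  have hcont : Continuous fun t : ℝ => 1 - ∑ i ∈ I, ENNReal.ofReal t ^ i :=
    (ENNReal.continuous_sub_left ENNReal.one_ne_top).comp
      (continuous_finsetSum I fun i _ => (ENNReal.continuous_pow i).comp ENNReal.continuous_ofReal)
  rw [← ENNReal.inv_zero, tendsto_inv_iff, ← tsub_self 1]
  simpa only [hsum] using hcont.tendsto r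

theorem comp_gf_diverges_general (a : ℕ) (r : ℝ) (hr0 : 0 < r)
    (hroot : 1 - ∑ i ∈ Finset.Icc 1 (a - 1), r ^ i = 0)
    (A : List ℕ) (hhead : A.head? = some a) :
    Filter.Tendsto
      (fun t : ℝ => ∑' n : ℕ,
        (Nat.card {c : List ℕ // (∀ x ∈ c, 0 < x) ∧ c.sum = n ∧ ¬ CompContains A c} : ENNReal)
          * ENNReal.ofReal t ^ n)
      (nhdsWithin r (Set.Iio r)) (nhds ⊤) :=
  tendsto_nhds_top_mono
    ((tendsto_inv_one_sub_sum_ofReal_pow hr0.le (by linarith)).mono_left nhdsWithin_le_nhds)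
    (Eventually.of_forall fun t => inv_one_sub_sum_pow_le_tsum_card_avoiding hhead _)

/-- If `a > 2`, `r_a` is the least positive root of `1 − t − ⋯ − t^{a−1}`, and `A` is a
partition whose greatest (first) part equals `a`, then the generating function of
compositions avoiding `A` tends to `∞` as `t → r_a⁻`. -/
theorem comp_gf_diverges (a : ℕ) (ha : 2 < a) (r : ℝ) (hr0 : 0 < r)
    (hroot : 1 - ∑ i ∈ Finset.Icc 1 (a - 1), r ^ i = 0)
    (hleast : ∀ s : ℝ, 0 < s → 1 - ∑ i ∈ Finset.Icc 1 (a - 1), s ^ i = 0 → r ≤ s)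
    (A : List ℕ) (hAdec : A.Pairwise (· ≥ ·)) (hApos : ∀ x ∈ A, 0 < x)
    (hhead : A.head? = some a) :
    Filter.Tendsto
      (fun t : ℝ => ∑' n : ℕ,
        (Nat.card {c : List ℕ // (∀ x ∈ c, 0 < x) ∧ c.sum = n ∧ ¬ CompContains A c} : ENNReal)
          * ENNReal.ofReal t ^ n)
      (nhdsWithin r (Set.Iio r)) (nhds ⊤) :=
  comp_gf_diverges_general a r hr0 hroot A hhead
end

section
/- Let ∼ be the smallest equivalence relation on compositions such that for all (possibly empty) lists P, Q of positive integers, all positive integers a, b: P++[a,b]++Q ∼ P++[b,a]++Q and P++[1,1]++Q ∼ P++[2]++Q. Then for all compositions A and B: the number of compositions of n avoiding A equals the number of compositions of n avoiding B for every n, if and only if A ∼ B. (That is, ∼ is sound and complete for Wilf-equivalence on the class of compositions, equivalently on the layered permutation class Av(312,231).) -/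
/-- One rewriting step of the equivalence `∼` on compositions:
`P ++ [a,b] ++ Q ∼ P ++ [b,a] ++ Q` and `P ++ [1,1] ++ Q ∼ P ++ [2] ++ Q`. -/
inductive CompStep : List ℕ → List ℕ → Prop
  | swap (P Q : List ℕ) (a b : ℕ) (hP : ∀ x ∈ P, 0 < x) (hQ : ∀ x ∈ Q, 0 < x)
      (ha : 0 < a) (hb : 0 < b) : CompStep (P ++ [a, b] ++ Q) (P ++ [b, a] ++ Q)
  | merge (P Q : List ℕ) (hP : ∀ x ∈ P, 0 < x) (hQ : ∀ x ∈ Q, 0 < x) :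
      CompStep (P ++ [1, 1] ++ Q) (P ++ [2] ++ Q)

/-!
Reading a composition greedily, it contains `a₁ … a_k` iff it factors uniquely as
`u₁ y₁ ⋯ u_k y_k w` with all parts of `uᵢ` below `aᵢ` and `yᵢ ≥ aᵢ`. Hence the generating
function of compositions containing `A` is `∏ H(aᵢ)` times that of all compositions, where
`H(a) = X^a / ((1 - X) D_a)` (`blockGenFun`) and `D_a = 1 - X - ⋯ - X^(a-1)` (`partsLtDenom`) is
the inverse of the generating function of compositions with all parts `< a`. So `A` and `B` are
Wilf-equivalent iff they have the same sum and the same polynomial `∏ (1 - X) D_{aᵢ}` (`weight`).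
Both invariants are preserved by `∼`, since `D₁ = 1` and `D₂ = 1 - X`. Conversely, for `a ≥ 3`
the polynomial `D_a` has a root in `(0, 1)` that is a root of no other `D_b`, so root
multiplicities recover how often each part `≥ 3` occurs; with the sum this determines the
`∼`-normal form: the parts `≥ 3` followed by ones.
-/

namespace CompWilf

open Finset Polynomial Relation
open scoped Classical PowerSeries

noncomputable def compositions (n : ℕ) : Finset (List ℕ) :=
  (univ : Finset (Composition n)).map ⟨Composition.blocks, fun _ _ => Composition.ext⟩

theorem mem_compositions {n : ℕ} {c : List ℕ} :
    c ∈ compositions n ↔ (∀ x ∈ c, 0 < x) ∧ c.sum = n := by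
  simp only [compositions, mem_map, mem_univ, true_and]
  constructor
  · rintro ⟨c, rfl⟩
    exact ⟨fun _ => c.blocks_pos, c.blocks_sum⟩
  · rintro ⟨hpos, hsum⟩
    exact ⟨⟨c, hpos _, hsum⟩, rfl⟩

theorem compositions_zero : compositions 0 = {[]} := by
  ext c
  rw [mem_compositions, mem_singleton]
  constructor
  · rintro ⟨hpos, hsum⟩
    cases c with
    | nil => rfl
    | cons x c =>
      rw [List.sum_cons, Nat.add_eq_zero_iff] at hsum
      exact absurd hsum.1 (hpos x List.mem_cons_self).ne'
  · rintro rfl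
    simp

noncomputable def count (p : List ℕ → Prop) (n : ℕ) : ℕ := #{c ∈ compositions n | p c}

theorem natCard_eq_count (p : List ℕ → Prop) (n : ℕ) :
    Nat.card {c : List ℕ // (∀ x ∈ c, 0 < x) ∧ c.sum = n ∧ p c} = count p n := by
  rw [count, ← Nat.card_eq_finsetCard]
  refine Nat.card_congr (Equiv.subtypeEquivRight fun c => ?_)
  rw [mem_filter, mem_compositions, and_assoc]

theorem count_add_count_not (p : List ℕ → Prop) (n : ℕ) :
    count p n + count (fun c => ¬ p c) n = #(compositions n) := by
  unfold count
  convert card_filter_add_card_filter_not p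

theorem count_not_eq_iff {p q : List ℕ → Prop} :
    (∀ n, count (fun c => ¬ p c) n = count (fun c => ¬ q c) n) ↔ ∀ n, count p n = count q n := by
  refine forall_congr' fun n => ?_
  have hp := count_add_count_not p n
  have hq := count_add_count_not q n
  omega

noncomputable def genFun (p : List ℕ → Prop) : ℝ⟦X⟧ := PowerSeries.mk fun n => (count p n : ℝ)

theorem genFun_eq_genFun_iff {p q : List ℕ → Prop} :
    genFun p = genFun q ↔ ∀ n, count p n = count q n := by
  simp [genFun, PowerSeries.ext_iff]

theorem genFun_congr {p q : List ℕ → Prop} (h : ∀ c, (∀ x ∈ c, 0 < x) → (p c ↔ q c)) :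
    genFun p = genFun q := by
  refine genFun_eq_genFun_iff.2 fun n => congrArg card (filter_congr fun c hc => ?_)
  exact h c (mem_compositions.1 hc).1

theorem constantCoeff_genFun {p : List ℕ → Prop} (hp : p []) :
    PowerSeries.constantCoeff (genFun p) = 1 := by
  simp [genFun, ← PowerSeries.coeff_zero_eq_constantCoeff_apply, count, compositions_zero,
    filter_singleton, hp]

theorem genFun_ne_nil_and {p : List ℕ → Prop} (hp : p []) :
    genFun (fun c => c ≠ [] ∧ p c) = genFun p - 1 := by
  ext n
  rcases n with _ | n
  · simp [genFun, count, compositions_zero, filter_singleton, hp]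
  · have : ∀ c ∈ compositions (n + 1), (c ≠ [] ∧ p c ↔ p c) := fun c hc => by
      have hc := (mem_compositions.1 hc).2
      refine and_iff_right_of_imp fun _ => ?_
      rintro rfl
      simp at hc
    simp [genFun, count, filter_congr this]

theorem count_eq_sum_of_unique_append {p p₁ p₂ : List ℕ → Prop}
    (hp : ∀ c, (∀ x ∈ c, 0 < x) → (p c ↔ ∃ u v, c = u ++ v ∧ p₁ u ∧ p₂ v))
    (huniq : ∀ u v u' v', p₁ u → p₂ v → p₁ u' → p₂ v' → u ++ v = u' ++ v' → u = u')
    (n : ℕ) : count p n = ∑ ij ∈ antidiagonal n, count p₁ ij.1 * count p₂ ij.2 := by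
  simp only [count, ← card_product]
  rw [← card_sigma]
  symm
  refine card_bij (fun x _ => x.2.1 ++ x.2.2) ?_ ?_ ?_
  · rintro ⟨⟨i, j⟩, u, v⟩ h
    simp only [mem_sigma, HasAntidiagonal.mem_antidiagonal, mem_product, mem_filter,
      mem_compositions] at h ⊢
    obtain ⟨rfl, ⟨⟨hu, rfl⟩, hpu⟩, ⟨hv, rfl⟩, hpv⟩ := h
    have hpos : ∀ x ∈ u ++ v, 0 < x := by simpa [or_imp, forall_and] using ⟨hu, hv⟩
    exact ⟨⟨hpos, by simp⟩, (hp _ hpos).2 ⟨u, v, rfl, hpu, hpv⟩⟩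
  · rintro ⟨⟨i, j⟩, u, v⟩ h ⟨⟨i', j'⟩, u', v'⟩ h' he
    simp only [mem_sigma, HasAntidiagonal.mem_antidiagonal, mem_product, mem_filter,
      mem_compositions] at h h' he
    obtain rfl := huniq u v u' v' h.2.1.2 h.2.2.2 h'.2.1.2 h'.2.2.2 he
    obtain rfl := List.append_cancel_left he
    rw [← h.2.1.1.2, ← h.2.2.1.2, ← h'.2.1.1.2, ← h'.2.2.1.2]
  · intro c hc
    simp only [mem_filter, mem_compositions] at hc
    obtain ⟨u, v, rfl, hpu, hpv⟩ := (hp c hc.1.1).1 hc.2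
    have hu : ∀ x ∈ u, 0 < x := fun x hx => hc.1.1 x (by simp [hx])
    have hv : ∀ x ∈ v, 0 < x := fun x hx => hc.1.1 x (by simp [hx])
    refine ⟨⟨(u.sum, v.sum), u, v⟩, ?_, rfl⟩
    simp only [mem_sigma, HasAntidiagonal.mem_antidiagonal, mem_product, mem_filter,
      mem_compositions]
    exact ⟨by simpa using hc.1.2, ⟨⟨hu, trivial⟩, hpu⟩, ⟨hv, trivial⟩, hpv⟩

theorem genFun_eq_mul_of_unique_append {p p₁ p₂ : List ℕ → Prop}
    (hp : ∀ c, (∀ x ∈ c, 0 < x) → (p c ↔ ∃ u v, c = u ++ v ∧ p₁ u ∧ p₂ v))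
    (huniq : ∀ u v u' v', p₁ u → p₂ v → p₁ u' → p₂ v' → u ++ v = u' ++ v' → u = u') :
    genFun p = genFun p₁ * genFun p₂ := by
  ext n
  simp [genFun, PowerSeries.coeff_mul, count_eq_sum_of_unique_append hp huniq]

def PartsLt (a : ℕ) (c : List ℕ) : Prop := ∀ x ∈ c, x < a

def SinglePart (P : ℕ → Prop) (c : List ℕ) : Prop := ∃ x, c = [x] ∧ P x

theorem SinglePart.unique_append {P : ℕ → Prop} {u v u' v' : List ℕ} (hu : SinglePart P u)
    (hu' : SinglePart P u') (h : u ++ v = u' ++ v') : u = u' := by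
  obtain ⟨x, rfl, -⟩ := hu
  obtain ⟨x', rfl, -⟩ := hu'
  simp_all

theorem count_singlePart (P : ℕ → Prop) (n : ℕ) :
    count (SinglePart P) n = if 0 < n ∧ P n then 1 else 0 := by
  rw [count]
  split_ifs with h
  · rw [card_eq_one]
    refine ⟨[n], Finset.ext fun c => ?_⟩
    rw [mem_filter, mem_compositions, mem_singleton]
    constructor
    · rintro ⟨⟨-, rfl⟩, x, rfl, -⟩
      simp
    · rintro rfl
      exact ⟨⟨by simpa using h.1, by simp⟩, n, rfl, h.2⟩
  · rw [card_eq_zero, filter_eq_empty_iff]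
    rintro c hc ⟨x, rfl, hx⟩
    simp only [mem_compositions] at hc
    simp_all

noncomputable def partsLtDenom (a : ℕ) : ℝ[X] := 1 - ∑ i ∈ Ico 1 a, X ^ i

theorem genFun_singlePart_lt (a : ℕ) :
    genFun (SinglePart (· < a)) = 1 - (partsLtDenom a : ℝ⟦X⟧) := by
  ext n
  simp [genFun, partsLtDenom, count_singlePart, Polynomial.coeff_coe, finsetSum_coeff,
    Polynomial.coeff_X_pow, Nat.one_le_iff_ne_zero, Nat.pos_iff_ne_zero]

theorem genFun_singlePart_ge {a : ℕ} (ha : 0 < a) :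
    genFun (SinglePart (a ≤ ·)) = PowerSeries.X ^ a * PowerSeries.mk 1 := by
  ext n
  rw [PowerSeries.coeff_X_pow_mul']
  simp only [genFun, count_singlePart, PowerSeries.coeff_mk]
  split_ifs <;> simp_all

theorem genFun_partsLt_mul_partsLtDenom (a : ℕ) :
    genFun (PartsLt a) * (partsLtDenom a : ℝ⟦X⟧) = 1 := by
  have hsplit : genFun (fun c => c ≠ [] ∧ PartsLt a c) =
      genFun (SinglePart (· < a)) * genFun (PartsLt a) := by
    refine genFun_eq_mul_of_unique_append (fun c hc => ?_)
      fun u v u' v' hu _ hu' _ h => hu.unique_append hu' h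
    constructor
    · rintro ⟨hne, hlt⟩
      obtain ⟨x, c, rfl⟩ := List.exists_cons_of_ne_nil hne
      exact ⟨[x], c, rfl, ⟨x, rfl, hlt x (by simp)⟩, fun y hy => hlt y (by simp [hy])⟩
    · rintro ⟨_, v, rfl, ⟨x, rfl, hx⟩, hv⟩
      exact ⟨by simp, by simpa [PartsLt, hx] using hv⟩
  rw [genFun_ne_nil_and (by simp [PartsLt]), genFun_singlePart_lt] at hsplit
  linear_combination hsplit

theorem PartsLt.unique_append_cons {a x x' : ℕ} {u w u' w' : List ℕ} (hu : PartsLt a u)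
    (hu' : PartsLt a u') (hx : a ≤ x) (hx' : a ≤ x') (h : u ++ x :: w = u' ++ x' :: w') :
    u = u' := by
  induction u generalizing u' with
  | nil =>
    cases u' with
    | nil => rfl
    | cons y u' =>
      rw [List.nil_append, List.cons_append, List.cons.injEq] at h
      exact absurd (h.1 ▸ hu' y List.mem_cons_self) (not_lt.2 hx)
  | cons y u ih =>
    cases u' with
    | nil =>
      rw [List.nil_append, List.cons_append, List.cons.injEq] at h
      exact absurd (h.1 ▸ hu y List.mem_cons_self) (not_lt.2 hx')
    | cons y' u' =>
      simp only [List.cons_append, List.cons.injEq] at h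
      rw [h.1, ih (fun z hz => hu z (by simp [hz])) (fun z hz => hu' z (by simp [hz])) h.2]

theorem exists_partsLt_append_of_cons_sublist {a x : ℕ} {s c : List ℕ}
    (hs : (x :: s).Sublist c) (hx : a ≤ x) :
    ∃ u y w, c = u ++ y :: w ∧ PartsLt a u ∧ a ≤ y ∧ s.Sublist w := by
  induction c with
  | nil => simp at hs
  | cons y c ih =>
    by_cases hy : a ≤ y
    · exact ⟨[], y, c, rfl, by simp [PartsLt], hy, hs.of_cons_cons⟩
    · cases hs with
      | cons _ hs =>
        obtain ⟨u, z, w, rfl, hu, hz, hsw⟩ := ih hs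
        refine ⟨y :: u, z, w, rfl, ?_, hz, hsw⟩
        simpa [PartsLt, not_le.1 hy] using hu
      | cons_cons _ hs => exact absurd hx hy

theorem compContains_cons_iff {a : ℕ} {A c : List ℕ} :
    CompContains (a :: A) c ↔
      ∃ u x w, c = u ++ x :: w ∧ PartsLt a u ∧ a ≤ x ∧ CompContains A w := by
  constructor
  · rintro ⟨_, hs, hle⟩
    obtain ⟨x, s, hax, hAs, rfl⟩ := List.forall₂_cons_left_iff.1 hle
    obtain ⟨u, y, w, rfl, hu, hy, hsw⟩ := exists_partsLt_append_of_cons_sublist hs hax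
    exact ⟨u, y, w, rfl, hu, hy, s, hsw, hAs⟩
  · rintro ⟨u, x, w, rfl, -, hax, s, hsw, hle⟩
    exact ⟨x :: s, (hsw.cons_cons x).trans (List.sublist_append_right u _), .cons hax hle⟩

noncomputable def blockGenFun (a : ℕ) : ℝ⟦X⟧ :=
  genFun (PartsLt a) * genFun (SinglePart (a ≤ ·))

theorem genFun_compContains (A : List ℕ) :
    genFun (CompContains A) = (A.map blockGenFun).prod * genFun fun _ => True := by
  induction A with
  | nil =>
    simp only [List.map_nil, List.prod_nil, one_mul]
    exact genFun_congr fun c _ => iff_true_intro ⟨[], List.nil_sublist c, .nil⟩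
  | cons a A ih =>
    have hrest : genFun (fun v => ∃ x w, v = x :: w ∧ a ≤ x ∧ CompContains A w) =
        genFun (SinglePart (a ≤ ·)) * genFun (CompContains A) := by
      refine genFun_eq_mul_of_unique_append (fun c _ => ?_)
        fun u v u' v' hu _ hu' _ h => hu.unique_append hu' h
      constructor
      · rintro ⟨x, w, rfl, hax, hw⟩
        exact ⟨[x], w, rfl, ⟨x, rfl, hax⟩, hw⟩
      · rintro ⟨_, w, rfl, ⟨x, rfl, hax⟩, hw⟩
        exact ⟨x, w, rfl, hax, hw⟩
    have hsplit : genFun (CompContains (a :: A)) =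
        genFun (PartsLt a) * genFun (fun v => ∃ x w, v = x :: w ∧ a ≤ x ∧ CompContains A w) := by
      refine genFun_eq_mul_of_unique_append (fun c _ => ?_) ?_
      · rw [compContains_cons_iff]
        constructor
        · rintro ⟨u, x, w, rfl, hu, hax, hw⟩
          exact ⟨u, x :: w, rfl, hu, x, w, rfl, hax, hw⟩
        · rintro ⟨u, _, rfl, hu, x, w, rfl, hax, hw⟩
          exact ⟨u, x, w, rfl, hu, hax, hw⟩
      · rintro u _ u' _ hu ⟨x, w, rfl, hax, -⟩ hu' ⟨x', w', rfl, hax', -⟩ h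
        exact hu.unique_append_cons hu' hax hax' h
    rw [hsplit, hrest, ih, List.map_cons, List.prod_cons, blockGenFun]
    ring

noncomputable def weight (A : List ℕ) : ℝ[X] := (A.map fun a => (1 - X) * partsLtDenom a).prod

theorem weight_cons (a : ℕ) (A : List ℕ) :
    weight (a :: A) = (1 - X) * partsLtDenom a * weight A := by
  simp [weight]

theorem blockGenFun_mul {a : ℕ} (ha : 0 < a) :
    blockGenFun a * ((1 - PowerSeries.X) * (partsLtDenom a : ℝ⟦X⟧)) = PowerSeries.X ^ a := by
  rw [blockGenFun, genFun_singlePart_ge ha]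
  calc _ = genFun (PartsLt a) * (partsLtDenom a : ℝ⟦X⟧) *
        (PowerSeries.mk 1 * (1 - PowerSeries.X)) * PowerSeries.X ^ a := by ring
    _ = _ := by rw [genFun_partsLt_mul_partsLtDenom, PowerSeries.mk_one_mul_one_sub_eq_one]; ring

theorem prod_blockGenFun_mul_weight {A : List ℕ} (hA : ∀ x ∈ A, 0 < x) :
    (A.map blockGenFun).prod * (weight A : ℝ⟦X⟧) = PowerSeries.X ^ A.sum := by
  induction A with
  | nil => simp [weight]
  | cons a A ih =>
    rw [List.map_cons, List.prod_cons, weight_cons, List.sum_cons, pow_add,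
      ← ih fun x hx => hA x (by simp [hx]), ← blockGenFun_mul (hA a (by simp))]
    push_cast
    ring

theorem eval_zero_partsLtDenom (a : ℕ) : (partsLtDenom a).eval 0 = 1 := by
  simp only [partsLtDenom, eval_sub, eval_one, eval_finsetSum, eval_pow, eval_X, sub_eq_self]
  exact Finset.sum_eq_zero fun i hi => zero_pow (by simp at hi; omega)

theorem eval_zero_weight (A : List ℕ) : (weight A).eval 0 = 1 := by
  induction A with
  | nil => simp [weight]
  | cons a A ih => simp [weight_cons, ih, eval_zero_partsLtDenom]

theorem weight_ne_zero (A : List ℕ) : weight A ≠ 0 := fun h => by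
  simpa [h] using eval_zero_weight A

theorem X_pow_mul_eq_X_pow_mul_iff {R : Type*} [CommRing R] [IsDomain R] {m n : ℕ}
    {p q : R[X]} (hp : p.eval 0 ≠ 0) (hq : q.eval 0 ≠ 0) :
    X ^ m * p = X ^ n * q ↔ m = n ∧ p = q := by
  refine ⟨fun h => ?_, by rintro ⟨rfl, rfl⟩; rfl⟩
  have hmult (k : ℕ) (f : R[X]) (hf : f.eval 0 ≠ 0) : rootMultiplicity 0 (X ^ k * f) = k := by
    have hf0 : f ≠ 0 := fun h => hf (by simp [h])
    rw [rootMultiplicity_mul (mul_ne_zero (pow_ne_zero _ X_ne_zero) hf0),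
      rootMultiplicity_eq_zero hf, ← sub_zero X, ← C_0, rootMultiplicity_X_sub_C_pow, add_zero]
  obtain rfl : m = n := by rw [← hmult m p hp, h, hmult n q hq]
  exact ⟨rfl, mul_left_cancel₀ (pow_ne_zero m X_ne_zero) h⟩

theorem genFun_compContains_eq_iff {A B : List ℕ} (hA : ∀ x ∈ A, 0 < x)
    (hB : ∀ x ∈ B, 0 < x) :
    genFun (CompContains A) = genFun (CompContains B) ↔
      A.sum = B.sum ∧ weight A = weight B := by
  have hall : genFun (fun _ => True) ≠ 0 := fun h => by
    simpa [h] using constantCoeff_genFun (p := fun _ => True) trivial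
  have hw (C : List ℕ) : (weight C : ℝ⟦X⟧) ≠ 0 := by
    rw [Ne, Polynomial.coe_eq_zero_iff]; exact weight_ne_zero C
  have hprod {C D : List ℕ} (hC : ∀ x ∈ C, 0 < x) :
      (C.map blockGenFun).prod * ((weight C : ℝ⟦X⟧) * weight D) =
        ((X ^ C.sum * weight D : ℝ[X]) : ℝ⟦X⟧) := by
    rw [← mul_assoc, prod_blockGenFun_mul_weight hC]
    push_cast
    rfl
  rw [genFun_compContains, genFun_compContains, mul_left_inj' hall,
    ← mul_left_inj' (mul_ne_zero (hw A) (hw B)), hprod hA, mul_comm (weight A : ℝ⟦X⟧), hprod hB,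
    Polynomial.coe_inj, X_pow_mul_eq_X_pow_mul_iff (by simp [eval_zero_weight])
      (by simp [eval_zero_weight]), eq_comm (a := weight B)]

theorem eval_partsLtDenom (a : ℕ) (r : ℝ) :
    (partsLtDenom a).eval r = 1 - ∑ i ∈ Ico 1 a, r ^ i := by
  simp [partsLtDenom, eval_finsetSum]

theorem eval_partsLtDenom_lt {b c : ℕ} (hb : 1 ≤ b) (hbc : b < c) {r : ℝ} (hr : 0 < r) :
    (partsLtDenom c).eval r < (partsLtDenom b).eval r := by
  rw [eval_partsLtDenom, eval_partsLtDenom, ← Finset.sum_Ico_consecutive _ hb hbc.le]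
  have := Finset.sum_pos (fun i _ => pow_pos hr i) (Finset.nonempty_Ico.2 hbc)
  linarith

theorem eq_of_isRoot_partsLtDenom {a b : ℕ} {r : ℝ} (hr : 0 < r)
    (ha : (partsLtDenom a).IsRoot r) (hb : (partsLtDenom b).IsRoot r) : a = b := by
  have one_le {c : ℕ} (hc : (partsLtDenom c).IsRoot r) : 1 ≤ c := by
    by_contra h
    obtain rfl : c = 0 := by omega
    simp [partsLtDenom] at hc
  rcases lt_trichotomy a b with h | rfl | h
  · exact absurd (hb.eq_zero.trans ha.eq_zero.symm) (eval_partsLtDenom_lt (one_le ha) h hr).ne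
  · rfl
  · exact absurd (ha.eq_zero.trans hb.eq_zero.symm) (eval_partsLtDenom_lt (one_le hb) h hr).ne

theorem exists_isRoot_partsLtDenom {a : ℕ} (ha : 3 ≤ a) :
    ∃ r : ℝ, 0 < r ∧ r < 1 ∧ (partsLtDenom a).IsRoot r := by
  have h0 := eval_zero_partsLtDenom a
  have h1 : (partsLtDenom a).eval 1 < 0 := by
    have : (2 : ℝ) ≤ ((a - 1 : ℕ) : ℝ) := by exact_mod_cast (by omega : 2 ≤ a - 1)
    simp only [eval_partsLtDenom, one_pow, sum_const, Nat.card_Ico, nsmul_eq_mul, mul_one]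
    linarith
  obtain ⟨r, ⟨hr0, hr1⟩, hr⟩ := intermediate_value_Icc' zero_le_one
    (partsLtDenom a).continuous.continuousOn ⟨h1.le, h0 ▸ zero_le_one⟩
  refine ⟨r, lt_of_le_of_ne hr0 ?_, lt_of_le_of_ne hr1 ?_, hr⟩
  · rintro rfl
    simp [h0] at hr
  · rintro rfl
    linarith

theorem rootMultiplicity_weight {r : ℝ} (hr : r ≠ 1) {a : ℕ} {A : List ℕ}
    (hA : ∀ b ∈ A, (partsLtDenom b).IsRoot r → b = a) :
    rootMultiplicity r (weight A) = A.count a * rootMultiplicity r (partsLtDenom a) := by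
  induction A with
  | nil => simp [weight]
  | cons b A ih =>
    have hne := weight_cons b A ▸ weight_ne_zero (b :: A)
    have h1X : rootMultiplicity r (1 - X) = 0 :=
      rootMultiplicity_eq_zero (by simp [sub_eq_zero, hr.symm])
    rw [weight_cons, rootMultiplicity_mul hne, rootMultiplicity_mul (left_ne_zero_of_mul hne),
      h1X, ih fun c hc => hA c (by simp [hc]), List.count_cons]
    by_cases hb : b = a
    · subst hb
      rw [beq_self_eq_true, if_pos rfl]
      ring
    · rw [rootMultiplicity_eq_zero fun h => hb (hA b (by simp) h)]
      simp [hb]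

theorem count_eq_of_weight_eq {A B : List ℕ} (h : weight A = weight B) {a : ℕ} (ha : 3 ≤ a) :
    A.count a = B.count a := by
  obtain ⟨r, hr0, hr1, hroot⟩ := exists_isRoot_partsLtDenom ha
  have hmult {C : List ℕ} := rootMultiplicity_weight hr1.ne (A := C)
    fun b _ hb => eq_of_isRoot_partsLtDenom hr0 hb hroot
  have hpos : 0 < rootMultiplicity r (partsLtDenom a) :=
    (rootMultiplicity_pos fun h => by simpa [h] using eval_zero_partsLtDenom a).2 hroot
  have := hmult (C := A)
  rw [h, hmult] at this
  exact (Nat.eq_of_mul_eq_mul_right hpos this).symm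

theorem CompStep.sum_eq {A B : List ℕ} (h : CompStep A B) : A.sum = B.sum := by
  cases h <;> simp only [List.sum_append, List.sum_cons, List.sum_nil] <;> omega

theorem partsLtDenom_one : partsLtDenom 1 = 1 := by
  simp [partsLtDenom]

theorem partsLtDenom_two : partsLtDenom 2 = 1 - X := by
  simp [partsLtDenom]

theorem CompStep.weight_eq {A B : List ℕ} (h : CompStep A B) : weight A = weight B := by
  cases h <;>
    simp only [weight, List.map_append, List.prod_append, List.map_cons, List.map_nil,
      List.prod_cons, List.prod_nil, partsLtDenom_one, partsLtDenom_two] <;>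
    ring

theorem sum_eq_and_weight_eq_of_eqvGen {A B : List ℕ} (h : EqvGen CompStep A B) :
    A.sum = B.sum ∧ weight A = weight B := by
  induction h with
  | rel _ _ h => exact ⟨CompStep.sum_eq h, CompStep.weight_eq h⟩
  | refl => exact ⟨rfl, rfl⟩
  | symm _ _ _ ih => exact ⟨ih.1.symm, ih.2.symm⟩
  | trans _ _ _ _ _ ih ih' => exact ⟨ih.1.trans ih'.1, ih.2.trans ih'.2⟩

theorem CompStep.append_left {P l l' : List ℕ} (hP : ∀ x ∈ P, 0 < x) (h : CompStep l l') :
    CompStep (P ++ l) (P ++ l') := by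
  cases h with
  | swap Q R a b hQ hR ha hb =>
    simpa using CompStep.swap (P ++ Q) R a b (by simpa [or_imp, forall_and] using ⟨hP, hQ⟩)
      hR ha hb
  | merge Q R hQ hR =>
    simpa using CompStep.merge (P ++ Q) R (by simpa [or_imp, forall_and] using ⟨hP, hQ⟩) hR

theorem eqvGen_append_left {P l l' : List ℕ} (hP : ∀ x ∈ P, 0 < x)
    (h : EqvGen CompStep l l') : EqvGen CompStep (P ++ l) (P ++ l') := by
  induction h with
  | rel _ _ h => exact .rel _ _ (CompStep.append_left hP h)
  | refl => exact .refl _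
  | symm _ _ _ ih => exact .symm _ _ ih
  | trans _ _ _ _ _ ih ih' => exact .trans _ _ _ ih ih'

theorem eqvGen_of_perm {A B : List ℕ} (h : A.Perm B) (hA : ∀ x ∈ A, 0 < x) :
    EqvGen CompStep A B := by
  induction h with
  | nil => exact .refl _
  | cons x _ ih =>
    exact eqvGen_append_left (P := [x]) (by simpa using hA x (by simp))
      (ih fun y hy => hA y (by simp [hy]))
  | swap x y l =>
    simpa using EqvGen.rel _ _ (CompStep.swap [] l y x (by simp)
      (fun z hz => hA z (by simp [hz])) (hA y (by simp)) (hA x (by simp)))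
  | trans h _ ih ih' => exact .trans _ _ _ (ih hA) (ih' fun y hy => hA y (h.mem_iff.2 hy))

theorem eqvGen_replicate_one {O : List ℕ} (hO : ∀ x ∈ O, x = 1 ∨ x = 2) :
    EqvGen CompStep O (List.replicate O.sum 1) := by
  induction O with
  | nil => exact .refl _
  | cons x O ih =>
    have hcons := eqvGen_append_left (P := [x])
      (by rcases hO x (by simp) with rfl | rfl <;> simp) (ih fun y hy => hO y (by simp [hy]))
    rcases hO x (by simp) with rfl | rfl
    · simpa [List.replicate_succ, add_comm] using hcons
    · have hsplit := EqvGen.symm _ _ (EqvGen.rel _ _ (CompStep.merge [] (List.replicate O.sum 1)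
        (by simp) (by simp +contextual)))
      simpa [List.replicate_succ, add_comm] using hcons.trans _ _ _ hsplit

theorem perm_filter_le_append_filter_lt (k : ℕ) (A : List ℕ) :
    A.Perm (A.filter (k ≤ ·) ++ A.filter (· < k)) := by
  refine (List.filter_append_perm (k ≤ ·) A).symm.trans (List.Perm.of_eq ?_)
  congr 1
  exact List.filter_congr fun x _ => by rw [← decide_not]; exact decide_eq_decide.2 not_le

theorem eqvGen_filter_append_replicate {A : List ℕ} (hA : ∀ x ∈ A, 0 < x) :
    EqvGen CompStep A (A.filter (3 ≤ ·) ++ List.replicate (A.filter (· < 3)).sum 1) := by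
  have hperm := perm_filter_le_append_filter_lt 3 A
  refine .trans _ _ _ (eqvGen_of_perm hperm hA)
    (eqvGen_append_left ?_ (eqvGen_replicate_one ?_))
  · simp only [List.mem_filter]
    exact fun x hx => hA x hx.1
  · simp only [List.mem_filter, decide_eq_true_eq]
    intro x hx
    have := hA x hx.1
    omega

theorem eqvGen_of_sum_eq_of_count_eq {A B : List ℕ} (hA : ∀ x ∈ A, 0 < x)
    (hB : ∀ x ∈ B, 0 < x) (hsum : A.sum = B.sum)
    (hcount : ∀ a, 3 ≤ a → A.count a = B.count a) :
    EqvGen CompStep A B := by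
  have hbig : (A.filter (3 ≤ ·)).Perm (B.filter (3 ≤ ·)) := by
    refine List.perm_iff_count.2 fun a => ?_
    by_cases ha : 3 ≤ a
    · simp [List.count_filter, ha, hcount a ha]
    · rw [List.count_eq_zero.2, List.count_eq_zero.2] <;> simp [ha]
  have hsmall : (A.filter (· < 3)).sum = (B.filter (· < 3)).sum := by
    have hA' := (perm_filter_le_append_filter_lt 3 A).sum_eq
    have hB' := (perm_filter_le_append_filter_lt 3 B).sum_eq
    rw [List.sum_append] at hA' hB'
    have := hbig.sum_eq
    omega
  have hmid : EqvGen CompStep (A.filter (3 ≤ ·) ++ List.replicate (A.filter (· < 3)).sum 1)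
      (B.filter (3 ≤ ·) ++ List.replicate (B.filter (· < 3)).sum 1) := by
    refine eqvGen_of_perm (hsmall ▸ hbig.append_right _) ?_
    intro x hx
    simp only [List.mem_append, List.mem_filter, List.mem_replicate] at hx
    rcases hx with hx | hx
    exacts [hA x hx.1, hx.2 ▸ Nat.one_pos]
  exact .trans _ _ _ (eqvGen_filter_append_replicate hA)
    (.trans _ _ _ hmid (.symm _ _ (eqvGen_filter_append_replicate hB)))

end CompWilf

/-- The smallest equivalence relation `∼` generated by `CompStep` is sound and complete
for Wilf-equivalence of composition patterns. -/
theorem comp_wilf_iff_eqvGen (A B : List ℕ) (hA : ∀ x ∈ A, 0 < x) (hB : ∀ x ∈ B, 0 < x) :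
    (∀ n : ℕ,
        Nat.card {c : List ℕ // (∀ x ∈ c, 0 < x) ∧ c.sum = n ∧ ¬ CompContains A c} =
        Nat.card {c : List ℕ // (∀ x ∈ c, 0 < x) ∧ c.sum = n ∧ ¬ CompContains B c}) ↔
      Relation.EqvGen CompStep A B := by
  simp only [CompWilf.natCard_eq_count]
  rw [CompWilf.count_not_eq_iff, ← CompWilf.genFun_eq_genFun_iff,
    CompWilf.genFun_compContains_eq_iff hA hB]
  constructor
  · rintro ⟨hsum, hweight⟩
    exact CompWilf.eqvGen_of_sum_eq_of_count_eq hA hB hsum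
      fun a ha => CompWilf.count_eq_of_weight_eq hweight ha
  · exact CompWilf.sum_eq_and_weight_eq_of_eqvGen
end

section
/- For n ≥ 0 let p_n ∈ ℤ[X] be the polynomial whose coefficient of X^m is the number of permutations of size m that avoid both 312 and 321 and whose longest increasing subsequence has length exactly n (this is a polynomial since such a permutation has size at most 2n). Then p_0 = 1, p_1 = X + X², and for all n ≥ 2, p_n = (2X + X²)·p_{n−1} − X²·p_{n−2}. -/
/-- `ι_n = 1 2 ⋯ n`, the increasing permutation of size `n`. -/
def iota (n : ℕ) : List ℕ := (List.range n).map (· + 1)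

/-!
A permutation avoids both `312` and `321` exactly when no entry has two smaller entries after
it. For such a permutation no two descents are adjacent, and its longest increasing subsequence
has length `m - des`: the entries that do not end a descent increase, while an increasing
subsequence can use at most one of the two entries of each descent.

Let `a(n, m)` count these permutations of size `m` with `des = m - n`. The maximum `m` of such
a permutation sits in one of its last two positions. If it is last, removing it gives a
permutation counted by `a(n - 1, m - 1)`. Otherwise it is followed by some `v`. When `v = m - 1`,
removing both entries gives one counted by `a(n - 1, m - 2)`. When `v < m - 1`, removing `m`
gives a permutation counted by `a(n - 1, m - 1)` that does not end in its maximum. Those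
permutations make up `a(n - 1, m - 1) - a(n - 2, m - 2)` by the first case, so
`a(n, m) = 2 a(n - 1, m - 1) + a(n - 1, m - 2) - a(n - 2, m - 2)`, which is the claimed
recurrence read coefficientwise.
-/

namespace List

variable {α : Type*}

lemma getD_mem_of_lt {l : List α} {i : ℕ} (d : α) (h : i < l.length) : l.getD i d ∈ l := by
  rw [getD_eq_getElem _ _ h]
  exact getElem_mem h

lemma Nodup.eq_of_getD_eq {l : List α} (hnd : l.Nodup) {i j : ℕ} {d : α} (hi : i < l.length)
    (hj : j < l.length) (h : l.getD i d = l.getD j d) : i = j := by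
  rw [getD_eq_getElem _ _ hi, getD_eq_getElem _ _ hj] at h
  exact hnd.getElem_inj_iff.1 h

lemma getD_append_cons_length (a b : List α) (x d : α) : (a ++ x :: b).getD a.length d = x := by
  rw [getD_append_right _ _ _ _ le_rfl, Nat.sub_self, getD_cons_zero]

lemma getD_append_cons_of_lt (a b : List α) (x d : α) {t : ℕ} (h : a.length < t) :
    (a ++ x :: b).getD t d = (a ++ b).getD (t - 1) d := by
  obtain ⟨s, rfl⟩ : ∃ s, t = a.length + s + 1 := ⟨t - a.length - 1, by omega⟩
  rw [getD_append_right _ _ _ _ (by omega), getD_append_right _ _ _ _ (by omega),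
    show a.length + s + 1 - a.length = s + 1 by omega, getD_cons_succ]
  congr 1
  omega

end List

lemma length_iota (k : ℕ) : (iota k).length = k := by simp [iota]

lemma mem_iota {x k : ℕ} : x ∈ iota k ↔ 1 ≤ x ∧ x ≤ k := by
  simp only [iota, List.mem_map, List.mem_range]
  exact ⟨by rintro ⟨y, hy, rfl⟩; omega, fun h => ⟨x - 1, by omega, by omega⟩⟩

lemma nodup_iota (k : ℕ) : (iota k).Nodup :=
  List.nodup_range.map fun _ _ h => by omega

lemma iota_succ (k : ℕ) : iota (k + 1) = iota k ++ [k + 1] := by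
  simp [iota, List.range_succ]

lemma lt_of_mem_of_perm_iota {l : List ℕ} {m y : ℕ} (h : l.Perm (iota m)) (hy : y ∈ l) :
    y < m + 1 :=
  Nat.lt_succ_of_le (mem_iota.1 (h.mem_iff.1 hy)).2

lemma append_cons_perm_iota_succ_iff (a b : List ℕ) (m : ℕ) :
    (a ++ (m + 1) :: b).Perm (iota (m + 1)) ↔ (a ++ b).Perm (iota m) := by
  rw [iota_succ]
  exact ⟨fun h => (List.perm_cons _).1
      (List.perm_middle.symm.trans (h.trans (List.perm_append_singleton _ _))),
    fun h => List.perm_middle.trans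
      (((List.perm_cons _).2 h).trans (List.perm_append_singleton _ _).symm)⟩

lemma append_singleton_perm_iota_succ_iff (a : List ℕ) (m : ℕ) :
    (a ++ [m + 1]).Perm (iota (m + 1)) ↔ a.Perm (iota m) := by
  simpa using append_cons_perm_iota_succ_iff a [] m

def NoTwoLaterSmaller (l : List ℕ) : Prop :=
  ∀ i j k : ℕ, i < j → j < k → k < l.length →
    l.getD j 0 < l.getD i 0 → l.getD k 0 < l.getD i 0 → False

lemma NoTwoLaterSmaller.of_involves {σ τ : List ℕ} (hτ : NoTwoLaterSmaller τ)
    (h : Involves σ τ) : NoTwoLaterSmaller σ := by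
  obtain ⟨f, hf, hiff⟩ := h
  intro i j k hij hjk hk hji hki
  have hi : i < σ.length := by omega
  have hj : j < σ.length := by omega
  rw [List.getD_eq_get _ _ ⟨i, hi⟩, List.getD_eq_get _ _ ⟨j, hj⟩] at hji
  rw [List.getD_eq_get _ _ ⟨i, hi⟩, List.getD_eq_get _ _ ⟨k, hk⟩] at hki
  refine hτ (f ⟨i, hi⟩) (f ⟨j, hj⟩) (f ⟨k, hk⟩) (hf (Fin.mk_lt_mk.2 hij))
    (hf (Fin.mk_lt_mk.2 hjk)) (f ⟨k, hk⟩).2 ?_ ?_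
  · rw [List.getD_eq_get, List.getD_eq_get]
    exact (hiff _ _).1 hji
  · rw [List.getD_eq_get, List.getD_eq_get]
    exact (hiff _ _).1 hki

lemma involves_of_sublist {σ τ : List ℕ} (h : σ.Sublist τ) : Involves σ τ := by
  obtain ⟨f, hf⟩ := List.sublist_iff_exists_fin_orderEmbedding_get_eq.1 h
  exact ⟨f, f.strictMono, fun i j => by rw [hf, hf]⟩

lemma involves_312_or_321 {l : List ℕ} (hnd : l.Nodup) {i j k : ℕ} (hij : i < j) (hjk : j < k)
    (hk : k < l.length) (hji : l.getD j 0 < l.getD i 0) (hki : l.getD k 0 < l.getD i 0) :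
    Involves [3, 1, 2] l ∨ Involves [3, 2, 1] l := by
  have hi : i < l.length := by omega
  have hj : j < l.length := by omega
  rw [List.getD_eq_getElem _ _ hj, List.getD_eq_getElem _ _ hi] at hji
  rw [List.getD_eq_getElem _ _ hk, List.getD_eq_getElem _ _ hi] at hki
  have hne : l[j] ≠ l[k] := fun h => by
    have := hnd.getElem_inj_iff.1 h
    omega
  have hmono : StrictMono ![(⟨i, hi⟩ : Fin l.length), ⟨j, hj⟩, ⟨k, hk⟩] := by
    refine Fin.strictMono_iff_lt_succ.2 fun a => ?_
    fin_cases a <;> simp [Fin.lt_def, hij, hjk]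
  rcases lt_or_gt_of_ne hne with hlt | hgt
  · refine .inl ⟨_, hmono, fun a b => ?_⟩
    fin_cases a <;> fin_cases b <;> simp [List.get] <;> omega
  · refine .inr ⟨_, hmono, fun a b => ?_⟩
    fin_cases a <;> fin_cases b <;> simp [List.get] <;> omega

lemma noTwoLaterSmaller_iff_avoids_312_321 {l : List ℕ} (hnd : l.Nodup) :
    NoTwoLaterSmaller l ↔ ¬ Involves [3, 1, 2] l ∧ ¬ Involves [3, 2, 1] l := by
  have h312 : ¬ NoTwoLaterSmaller [3, 1, 2] := fun h =>
    h 0 1 2 (by simp) (by simp) (by simp) (by simp) (by simp)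
  have h321 : ¬ NoTwoLaterSmaller [3, 2, 1] := fun h =>
    h 0 1 2 (by simp) (by simp) (by simp) (by simp) (by simp)
  refine ⟨fun h => ⟨fun hi => h312 (h.of_involves hi), fun hi => h321 (h.of_involves hi)⟩,
    ?_⟩
  rintro ⟨h1, h2⟩ i j k hij hjk hk hji hki
  exact (involves_312_or_321 hnd hij hjk hk hji hki).elim h1 h2

lemma noTwoLaterSmaller_append_cons_iff {a b : List ℕ} {x : ℕ} (hb : b.length ≤ 1)
    (hx : ∀ y ∈ a, y < x) : NoTwoLaterSmaller (a ++ x :: b) ↔ NoTwoLaterSmaller (a ++ b) := by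
  refine ⟨fun h => h.of_involves
    (involves_of_sublist ((List.sublist_cons_self x b).append_left a)),
    fun h i j k hij hjk hk hji hki => ?_⟩
  simp only [List.length_append, List.length_cons] at hk
  have hi : i < a.length := by omega
  have hxi : a.getD i 0 < x := hx _ (List.getD_mem_of_lt 0 hi)
  have hA : ∀ {c : List ℕ} {t}, t < a.length → (a ++ c).getD t 0 = a.getD t 0 :=
    fun ht => List.getD_append _ _ _ _ ht
  rw [hA hi] at hji hki
  rcases lt_trichotomy j a.length with hj | rfl | hj
  · rw [hA hj] at hji
    have hji' : (a ++ b).getD j 0 < (a ++ b).getD i 0 := by rwa [hA hj, hA hi]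
    rcases lt_trichotomy k a.length with hk' | rfl | hk'
    · rw [hA hk'] at hki
      exact h i j k hij hjk (by simp only [List.length_append]; omega) hji'
        (by rwa [hA hk', hA hi])
    · rw [List.getD_append_cons_length] at hki
      exact hxi.asymm hki
    · rw [List.getD_append_cons_of_lt _ _ _ _ hk'] at hki
      exact h i j (k - 1) hij (by omega) (by simp only [List.length_append]; omega) hji'
        (by rwa [hA hi])
  · rw [List.getD_append_cons_length] at hji
    exact hxi.asymm hji
  · omega

lemma noTwoLaterSmaller_append_singleton_iff {a : List ℕ} {x : ℕ} (hx : ∀ y ∈ a, y < x) :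
    NoTwoLaterSmaller (a ++ [x]) ↔ NoTwoLaterSmaller a := by
  simpa using noTwoLaterSmaller_append_cons_iff (b := []) (by simp) hx

def descents (l : List ℕ) : Finset ℕ :=
  (Finset.range (l.length - 1)).filter fun i => l.getD (i + 1) 0 < l.getD i 0

lemma mem_descents {l : List ℕ} {d : ℕ} :
    d ∈ descents l ↔ d < l.length - 1 ∧ l.getD (d + 1) 0 < l.getD d 0 := by
  simp [descents]

lemma card_descents_le (l : List ℕ) : (descents l).card ≤ l.length - 1 :=
  (Finset.card_filter_le _ _).trans (by simp)

lemma mem_descents_append_singleton {a : List ℕ} {x d : ℕ} :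
    d ∈ descents (a ++ [x]) ↔ d ∈ descents a ∨ (d + 1 = a.length ∧ x < a.getD d 0) := by
  simp only [mem_descents, List.length_append, List.length_singleton, Nat.add_sub_cancel]
  constructor
  · rintro ⟨hd, h⟩
    rw [List.getD_append _ _ _ _ hd] at h
    rcases (show d + 1 < a.length ∨ d + 1 = a.length by omega) with h' | h'
    · rw [List.getD_append _ _ _ _ h'] at h
      exact .inl ⟨by omega, h⟩
    · rw [h', List.getD_append_cons_length] at h
      exact .inr ⟨h', h⟩
  · rintro (⟨hd, h⟩ | ⟨h', h⟩)
    · refine ⟨by omega, ?_⟩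
      rwa [List.getD_append _ _ _ _ (by omega), List.getD_append _ _ _ _ (by omega)]
    · refine ⟨by omega, ?_⟩
      rwa [h', List.getD_append_cons_length, List.getD_append _ _ _ _ (by omega)]

lemma descents_append_of_forall_lt {a : List ℕ} {x : ℕ} (hx : ∀ y ∈ a, y < x) :
    descents (a ++ [x]) = descents a := by
  ext d
  rw [mem_descents_append_singleton, or_iff_left]
  rintro ⟨hd, h⟩
  exact h.asymm (hx _ (List.getD_mem_of_lt 0 (by omega)))

lemma card_descents_append_pair {a : List ℕ} {x v : ℕ} (hv : v < x) :
    (descents (a ++ [x, v])).card = (descents (a ++ [x])).card + 1 := by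
  have hd : descents (a ++ [x, v]) = insert a.length (descents (a ++ [x])) := by
    ext d
    rw [show a ++ [x, v] = a ++ [x] ++ [v] by simp, mem_descents_append_singleton,
      Finset.mem_insert, List.length_append, List.length_singleton, add_left_inj]
    constructor
    · rintro (h | ⟨rfl, -⟩) <;> tauto
    · rintro (rfl | h)
      · exact .inr ⟨rfl, by rwa [List.getD_append_cons_length]⟩
      · exact .inl h
  rw [hd, Finset.card_insert_of_notMem fun h => by simpa using (mem_descents.1 h).1]

lemma involves_iota_iff {l : List ℕ} {k : ℕ} : Involves (iota k) l ↔
    ∃ s ⊆ Finset.range l.length, s.card = k ∧ StrictMonoOn (l.getD · 0) s := by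
  have hlen := length_iota k
  have hget : ∀ i, (iota k).get i = i + 1 := fun i => by
    rw [List.get_eq_getElem]; simp [iota]
  constructor
  · rintro ⟨f, hf, hiff⟩
    refine ⟨Finset.univ.image fun i => (f i : ℕ), fun x hx => ?_, ?_, ?_⟩
    · obtain ⟨i, -, rfl⟩ := Finset.mem_image.1 hx
      exact Finset.mem_range.2 (f i).2
    · rw [Finset.card_image_of_injective _ fun a b h => hf.injective (Fin.ext h),
        Finset.card_univ, Fintype.card_fin, hlen]
    · simp only [Finset.coe_image, Finset.coe_univ, Set.image_univ]
      rintro _ ⟨a, rfl⟩ _ ⟨b, rfl⟩ hab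
      show l.getD (f a) 0 < l.getD (f b) 0
      rw [List.getD_eq_get, List.getD_eq_get, ← hiff, hget, hget]
      exact Nat.add_lt_add_right (hf.lt_iff_lt.1 hab) 1
  · rintro ⟨s, hs, hcard, hmono⟩
    let e := s.orderIsoOfFin hcard
    let g : Fin (iota k).length → Fin l.length :=
      fun i => ⟨e (Fin.cast hlen i), Finset.mem_range.1 (hs (e _).2)⟩
    have hg : StrictMono g := fun a b hab => e.strictMono ((Fin.cast_lt_cast hlen).2 hab)
    have hlg : StrictMono fun i => l.get (g i) := fun a b hab => by
      show l.get (g a) < l.get (g b)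
      rw [← List.getD_eq_get _ 0, ← List.getD_eq_get _ 0]
      exact hmono (e _).2 (e _).2 (hg hab)
    refine ⟨g, hg, fun a b => ?_⟩
    rw [hget, hget, add_lt_add_iff_right, Fin.val_fin_lt, hlg.lt_iff_lt]

lemma strictMonoOn_compl_image_succ_descents {l : List ℕ} (hnd : l.Nodup)
    (hok : NoTwoLaterSmaller l) :
    StrictMonoOn (l.getD · 0) ↑(Finset.range l.length \ (descents l).image (· + 1)) := by
  intro a ha b hb hab
  simp only [Finset.coe_sdiff, Finset.coe_range, Finset.coe_image, Set.mem_sdiff,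
    Set.mem_Iio, Set.mem_image, Finset.mem_coe, not_exists, not_and] at ha hb
  have hstep : l.getD (b - 1) 0 ≤ l.getD b 0 := by
    by_contra h
    exact hb.2 (b - 1) (mem_descents.2 ⟨by omega, by rw [Nat.sub_add_cancel (by omega)]; omega⟩)
      (by omega)
  by_contra hba
  have hlt : l.getD b 0 < l.getD a 0 := lt_of_le_of_ne (not_lt.1 hba)
    fun h => absurd (hnd.eq_of_getD_eq hb.1 ha.1 h) (by omega)
  rcases (show a ≤ b - 1 by omega).eq_or_lt with rfl | ha'
  · omega
  · exact hok a (b - 1) b ha' (by omega) hb.1 (by omega) hlt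

lemma card_add_card_descents_le {l : List ℕ} (hok : NoTwoLaterSmaller l) {s : Finset ℕ}
    (hs : s ⊆ Finset.range l.length) (hmono : StrictMonoOn (l.getD · 0) s) :
    s.card + (descents l).card ≤ l.length := by
  -- an injection from the descents into the positions outside `s`
  let g : ℕ → ℕ := fun d => if d ∈ s then d + 1 else d
  have hmaps : ∀ d ∈ descents l, g d ∈ Finset.range l.length \ s := by
    intro d hd
    obtain ⟨hdl, hdesc⟩ := mem_descents.1 hd
    by_cases h : d ∈ s
    · refine Finset.mem_sdiff.2 ⟨Finset.mem_range.2 (by simp only [g, if_pos h]; omega),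
        fun h' => ?_⟩
      simp only [g, if_pos h] at h'
      exact (hmono h h' (Nat.lt_succ_self d)).asymm hdesc
    · simp only [g, if_neg h, Finset.mem_sdiff, Finset.mem_range]
      exact ⟨by omega, h⟩
  have hg : ∀ d₁ ∈ descents l, ∀ d₂ ∈ descents l, d₁ < d₂ → g d₁ < g d₂ := by
    intro d₁ h₁ d₂ h₂ hlt
    obtain ⟨-, h₁'⟩ := mem_descents.1 h₁
    obtain ⟨hd₂, h₂'⟩ := mem_descents.1 h₂
    have : d₂ ≠ d₁ + 1 := by
      rintro rfl
      exact hok d₁ (d₁ + 1) (d₁ + 2) (by omega) (by omega) (by omega) h₁'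
        (h₂'.trans h₁')
    simp only [g]; split_ifs <;> omega
  have hinj : Set.InjOn g (descents l) := fun d₁ h₁ d₂ h₂ heq => by
    rcases lt_trichotomy d₁ d₂ with h | h | h
    · exact absurd heq (hg d₁ h₁ d₂ h₂ h).ne
    · exact h
    · exact absurd heq (hg d₂ h₂ d₁ h₁ h).ne'
  have := Finset.card_le_card_of_injOn g hmaps hinj
  rw [Finset.card_sdiff_of_subset hs, Finset.card_range] at this
  have := Finset.card_le_card hs
  simp only [Finset.card_range] at this
  omega

lemma involves_iota_iff_add_card_descents_le {l : List ℕ} (hnd : l.Nodup)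
    (hok : NoTwoLaterSmaller l) (k : ℕ) :
    Involves (iota k) l ↔ k + (descents l).card ≤ l.length := by
  rw [involves_iota_iff]
  constructor
  · rintro ⟨s, hs, rfl, hmono⟩
    exact card_add_card_descents_le hok hs hmono
  · intro hk
    set t := Finset.range l.length \ (descents l).image (· + 1)
    have hsub : (descents l).image (· + 1) ⊆ Finset.range l.length := fun x hx => by
      obtain ⟨d, hd, rfl⟩ := Finset.mem_image.1 hx
      exact Finset.mem_range.2 (by have := (mem_descents.1 hd).1; omega)
    have ht : k ≤ t.card := by
      rw [Finset.card_sdiff_of_subset hsub, Finset.card_range,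
        Finset.card_image_of_injective _ (add_left_injective 1)]
      omega
    obtain ⟨s, hst, hs⟩ := Finset.exists_subset_card_eq ht
    exact ⟨s, hst.trans Finset.sdiff_subset, hs,
      (strictMonoOn_compl_image_succ_descents hnd hok).mono (Finset.coe_subset.2 hst)⟩

lemma involves_iota_iff_length_eq {l : List ℕ} (hnd : l.Nodup) (hok : NoTwoLaterSmaller l)
    (n : ℕ) : Involves (iota n) l ∧ ¬ Involves (iota (n + 1)) l ↔
      l.length = n + (descents l).card := by
  simp only [involves_iota_iff_add_card_descents_le hnd hok]
  omega

lemma eq_of_perm_iota_append_pair {a : List ℕ} {x y m : ℕ}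
    (hperm : (a ++ [x, y]).Perm (iota (m + 1))) (hok : NoTwoLaterSmaller (a ++ [x, y]))
    (hy : y ≠ m + 1) : x = m + 1 := by
  set l := a ++ [x, y]
  have hlen : l.length = a.length + 2 := by simp [l]
  have hnd : l.Nodup := hperm.nodup_iff.2 (nodup_iota _)
  obtain ⟨p, hp, hpv⟩ :=
    List.getElem_of_mem (hperm.mem_iff.2 (mem_iota.2 ⟨by omega, le_rfl⟩))
  rw [← List.getD_eq_getElem _ 0] at hpv
  have hlt : ∀ t < l.length, t ≠ p → l.getD t 0 < m + 1 := fun t ht htp =>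
    lt_of_le_of_ne
      (Nat.le_of_lt_succ (lt_of_mem_of_perm_iota hperm (List.getD_mem_of_lt 0 ht)))
      fun h => htp (hnd.eq_of_getD_eq ht hp (h.trans hpv.symm))
  rcases (show p + 2 < l.length ∨ p = a.length ∨ p = a.length + 1 by omega) with h | rfl | rfl
  · exact (hok p (p + 1) (p + 2) (by omega) (by omega) h (hpv ▸ hlt _ (by omega) (by omega))
      (hpv ▸ hlt _ h (by omega))).elim
  · rwa [List.getD_append_cons_length] at hpv
  · rw [List.getD_append_cons_of_lt _ _ _ _ (by omega), Nat.add_sub_cancel,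
      List.getD_append_cons_length] at hpv
    exact absurd hpv hy

/-- The permutations of size `m` avoiding `312` and `321` whose longest increasing subsequence
has length `n`, described through `n = m - des` (see `mem_avLis_iff`). -/
def avLis (n m : ℕ) : Set (List ℕ) :=
  {l | l.Perm (iota m) ∧ NoTwoLaterSmaller l ∧ m = n + (descents l).card}

lemma length_of_mem_avLis {l : List ℕ} {n m : ℕ} (h : l ∈ avLis n m) : l.length = m :=
  h.1.length_eq.trans (length_iota m)

lemma mem_avLis_iff {l : List ℕ} {n m : ℕ} : l ∈ avLis n m ↔
    l.length = m ∧ IsPermList l ∧ ¬ Involves [3, 1, 2] l ∧ ¬ Involves [3, 2, 1] l ∧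
      Involves (iota n) l ∧ ¬ Involves (iota (n + 1)) l := by
  constructor
  · intro hl
    obtain rfl := length_of_mem_avLis hl
    obtain ⟨hperm, hok, hm⟩ := hl
    have hnd := hperm.nodup_iff.2 (nodup_iota _)
    obtain ⟨h312, h321⟩ := (noTwoLaterSmaller_iff_avoids_312_321 hnd).1 hok
    exact ⟨rfl, hperm, h312, h321, (involves_iota_iff_length_eq hnd hok n).2 hm⟩
  · rintro ⟨rfl, hperm, h312, h321, hlis⟩
    have hperm : l.Perm (iota l.length) := hperm
    have hnd := hperm.nodup_iff.2 (nodup_iota _)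
    have hok := (noTwoLaterSmaller_iff_avoids_312_321 hnd).2 ⟨h312, h321⟩
    exact ⟨hperm, hok, (involves_iota_iff_length_eq hnd hok n).1 hlis⟩

instance (n m : ℕ) : Finite (avLis n m) :=
  Set.Finite.to_subtype <| (iota m).permutations.toFinset.finite_toSet.subset fun l hl => by
    simpa [List.mem_permutations] using hl.1

lemma append_max_mem_avLis_iff {a : List ℕ} {n m : ℕ} :
    a ++ [m + 1] ∈ avLis (n + 1) (m + 1) ↔ a ∈ avLis n m := by
  simp only [avLis, Set.mem_ofPred_eq, append_singleton_perm_iota_succ_iff]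
  refine and_congr_right fun hperm => ?_
  have hx : ∀ y ∈ a, y < m + 1 := fun y hy => lt_of_mem_of_perm_iota hperm hy
  rw [noTwoLaterSmaller_append_singleton_iff hx, descents_append_of_forall_lt hx]
  exact and_congr_right fun _ => by omega

lemma append_max_pred_mem_avLis_iff {a : List ℕ} {n m : ℕ} :
    a ++ [m + 2, m + 1] ∈ avLis (n + 1) (m + 2) ↔ a ∈ avLis n m := by
  simp only [avLis, Set.mem_ofPred_eq, show m + 2 = m + 1 + 1 from rfl,
    append_cons_perm_iota_succ_iff, List.append_nil]
  refine and_congr_right fun hperm => ?_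
  have hx : ∀ y ∈ a, y < m + 1 := fun y hy => lt_of_mem_of_perm_iota hperm hy
  have hx' : ∀ y ∈ a, y < m + 1 + 1 := fun y hy => (hx y hy).trans (Nat.lt_succ_self _)
  rw [noTwoLaterSmaller_append_cons_iff (by simp) hx', noTwoLaterSmaller_append_singleton_iff hx,
    card_descents_append_pair (Nat.lt_succ_self _), descents_append_of_forall_lt hx']
  exact and_congr_right fun _ => by omega

lemma insert_max_mem_avLis_iff {a : List ℕ} {n m v : ℕ} (hv : v ≤ m) :
    a ++ [m + 2, v] ∈ avLis (n + 1) (m + 2) ↔ a ++ [v] ∈ avLis n (m + 1) := by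
  simp only [avLis, Set.mem_ofPred_eq, show m + 2 = m + 1 + 1 from rfl,
    append_cons_perm_iota_succ_iff]
  refine and_congr_right fun hperm => ?_
  have hx : ∀ y ∈ a, y < m + 1 + 1 := fun y hy =>
    lt_of_mem_of_perm_iota hperm (List.mem_append_left _ hy)
  rw [noTwoLaterSmaller_append_cons_iff (by simp) hx]
  refine and_congr_right fun hok => ?_
  -- the maximum `m + 1` of `a ++ [v]` is not last, so it is second to last
  obtain ⟨t, rfl⟩ : ∃ t, a = t ++ [m + 1] := by
    rcases List.eq_nil_or_concat a with rfl | ⟨t, x, rfl⟩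
    · have h1 := (mem_iota.1 (hperm.mem_iff.1 (List.mem_singleton_self v))).1
      have h2 : 1 = m + 1 := by simpa [length_iota] using hperm.length_eq
      omega
    · simp only [List.concat_eq_append, List.append_assoc, List.singleton_append] at hperm hok ⊢
      exact ⟨t, by rw [eq_of_perm_iota_append_pair hperm hok (by omega)]⟩
  rw [card_descents_append_pair (by omega : v < m + 1 + 1), descents_append_of_forall_lt hx,
    show t ++ [m + 1] ++ [v] = t ++ [m + 1, v] by simp,
    card_descents_append_pair (by omega : v < m + 1)]
  omega

def lastNotMax (n m : ℕ) : Set (List ℕ × ℕ) :=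
  {p | p.1 ++ [p.2] ∈ avLis n (m + 1) ∧ p.2 ≤ m}

lemma append_singleton_injective : Function.Injective fun p : List ℕ × ℕ => p.1 ++ [p.2] :=
  fun p q h => by simpa [Prod.ext_iff] using List.append_inj' h rfl

lemma append_pair_injective (x : ℕ) :
    Function.Injective fun p : List ℕ × ℕ => p.1 ++ [x, p.2] :=
  fun p q h => by simpa [Prod.ext_iff] using List.append_inj' h rfl

instance (n m : ℕ) : Finite (lastNotMax n m) :=
  Set.Finite.to_subtype <|
    ((Set.toFinite (avLis n (m + 1))).preimage append_singleton_injective.injOn).subset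
      fun _ h => h.1

lemma avLis_succ_succ (n m : ℕ) : avLis (n + 1) (m + 1) =
    (· ++ [m + 1]) '' avLis n m ∪ (fun p => p.1 ++ [p.2]) '' lastNotMax (n + 1) m := by
  ext l
  constructor
  · intro hl
    obtain ⟨a, y, rfl⟩ : ∃ a y, l = a ++ [y] := by
      rcases List.eq_nil_or_concat l with rfl | ⟨a, y, rfl⟩
      · simpa using length_of_mem_avLis hl
      · exact ⟨a, y, List.concat_eq_append ..⟩
    have hy := lt_of_mem_of_perm_iota hl.1 (List.mem_append_right _ (List.mem_singleton_self y))
    rcases Nat.lt_succ_iff_lt_or_eq.1 hy with hy | rfl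
    · exact .inr ⟨(a, y), ⟨hl, by omega⟩, rfl⟩
    · exact .inl ⟨a, append_max_mem_avLis_iff.1 hl, rfl⟩
  · rintro (⟨a, ha, rfl⟩ | ⟨p, hp, rfl⟩)
    · exact append_max_mem_avLis_iff.2 ha
    · exact hp.1

lemma avLis_succ_add_two (n m : ℕ) : avLis (n + 1) (m + 2) =
    (· ++ [m + 2]) '' avLis n (m + 1) ∪ (· ++ [m + 2, m + 1]) '' avLis n m ∪
      (fun p => p.1 ++ [m + 2, p.2]) '' lastNotMax n m := by
  ext l
  constructor
  · intro hl
    obtain ⟨a, x, y, rfl⟩ : ∃ a x y, l = a ++ [x, y] := by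
      rcases List.eq_nil_or_concat l with rfl | ⟨b, y, rfl⟩
      · simpa using length_of_mem_avLis hl
      rcases List.eq_nil_or_concat b with rfl | ⟨a, x, rfl⟩
      · simpa using length_of_mem_avLis hl
      · exact ⟨a, x, y, by simp⟩
    have hy := lt_of_mem_of_perm_iota hl.1 (by simp : y ∈ a ++ [x, y])
    by_cases hy2 : y = m + 2
    · subst hy2
      refine .inl (.inl ⟨a ++ [x], append_max_mem_avLis_iff.1 ?_, by simp⟩)
      simpa using hl
    obtain rfl := eq_of_perm_iota_append_pair hl.1 hl.2.1 hy2
    rcases (show y = m + 1 ∨ y ≤ m by omega) with rfl | hym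
    · exact .inl (.inr ⟨a, append_max_pred_mem_avLis_iff.1 hl, rfl⟩)
    · exact .inr ⟨(a, y), ⟨(insert_max_mem_avLis_iff hym).1 hl, hym⟩, rfl⟩
  · rintro ((⟨b, hb, rfl⟩ | ⟨a, ha, rfl⟩) | ⟨p, hp, rfl⟩)
    · exact append_max_mem_avLis_iff.2 hb
    · exact append_max_pred_mem_avLis_iff.2 ha
    · exact (insert_max_mem_avLis_iff hp.2).2 hp.1

lemma disjoint_image_of_getLast?_ne {α β : Type*} {f : α → List ℕ} {g : β → List ℕ}
    {s : Set α} {t : Set β} (h : ∀ a ∈ s, ∀ b ∈ t, (f a).getLast? ≠ (g b).getLast?) :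
    Disjoint (f '' s) (g '' t) := by
  rw [Set.disjoint_left]
  rintro _ ⟨a, ha, rfl⟩ ⟨b, hb, hab⟩
  exact h a ha b hb (congrArg _ hab.symm)

lemma ncard_avLis_succ_succ (n m : ℕ) :
    (avLis (n + 1) (m + 1)).ncard = (avLis n m).ncard + (lastNotMax (n + 1) m).ncard := by
  rw [avLis_succ_succ, Set.ncard_union_eq,
    Set.ncard_image_of_injective _ (List.append_left_injective _),
    Set.ncard_image_of_injective _ append_singleton_injective]
  refine disjoint_image_of_getLast?_ne fun a _ p hp => ?_
  simp only [List.getLast?_append, List.getLast?_singleton, Option.some_or, ne_eq,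
    Option.some.injEq]
  have := hp.2
  omega

lemma ncard_avLis_succ_add_two (n m : ℕ) : (avLis (n + 1) (m + 2)).ncard =
    (avLis n (m + 1)).ncard + (avLis n m).ncard + (lastNotMax n m).ncard := by
  rw [avLis_succ_add_two, Set.ncard_union_eq, Set.ncard_union_eq,
    Set.ncard_image_of_injective _ (List.append_left_injective _),
    Set.ncard_image_of_injective _ (List.append_left_injective _),
    Set.ncard_image_of_injective _ (append_pair_injective _)]
  · exact disjoint_image_of_getLast?_ne fun a _ b _ => by simp
  · refine Set.disjoint_union_left.2 ⟨?_, ?_⟩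
    all_goals
      refine disjoint_image_of_getLast?_ne fun a _ p hp => ?_
      simp only [List.getLast?_append, List.getLast?_cons_cons, List.getLast?_singleton,
        Option.some_or, ne_eq, Option.some.injEq]
      have := hp.2
      omega

lemma avLis_eq_empty_of_lt {n m : ℕ} (h : m < n) : avLis n m = ∅ :=
  Set.eq_empty_of_forall_notMem fun l hl => by have := hl.2.2; omega

lemma avLis_zero_succ (m : ℕ) : avLis 0 (m + 1) = ∅ :=
  Set.eq_empty_of_forall_notMem fun l hl => by
    have := card_descents_le l
    have := length_of_mem_avLis hl
    have := hl.2.2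
    omega

lemma ncard_avLis_zero_zero : (avLis 0 0).ncard = 1 := by
  refine Set.ncard_eq_one.2 ⟨[], Set.eq_singleton_iff_unique_mem.2 ⟨?_, fun l hl => ?_⟩⟩
  · exact ⟨by simp [iota], fun _ _ _ _ _ hk => by simp at hk, by simp [descents]⟩
  · exact List.length_eq_zero_iff.1 (length_of_mem_avLis hl)

lemma lastNotMax_zero_right (n : ℕ) : lastNotMax n 0 = ∅ :=
  Set.eq_empty_of_forall_notMem fun p hp => by
    have := (mem_iota.1 (hp.1.1.mem_iff.1 (List.mem_append_right _ (List.mem_singleton_self _)))).1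
    have := hp.2
    omega

lemma lastNotMax_zero_left (m : ℕ) : lastNotMax 0 m = ∅ :=
  Set.eq_empty_of_forall_notMem fun p hp => by simpa [avLis_zero_succ] using hp.1

lemma ncard_avLis_one (m : ℕ) : (avLis 1 m).ncard = if m = 1 ∨ m = 2 then 1 else 0 := by
  match m with
  | 0 => simp [avLis_eq_empty_of_lt]
  | 1 => simp [ncard_avLis_succ_succ, ncard_avLis_zero_zero, lastNotMax_zero_right]
  | 2 => simp [ncard_avLis_succ_add_two, ncard_avLis_zero_zero, avLis_zero_succ,
      lastNotMax_zero_left]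
  | k + 3 => simp [ncard_avLis_succ_add_two, avLis_zero_succ, lastNotMax_zero_left]

lemma ncard_avLis_add_two_add_two (n m : ℕ) :
    (avLis (n + 2) (m + 2)).ncard + (avLis n m).ncard =
      2 * (avLis (n + 1) (m + 1)).ncard + (avLis (n + 1) m).ncard := by
  have h₁ : (avLis (n + 2) (m + 2)).ncard = _ := ncard_avLis_succ_add_two (n + 1) m
  have h₂ := ncard_avLis_succ_succ n m
  omega

lemma natCard_eq_ncard_avLis (n m : ℕ) :
    Nat.card {l : List ℕ // l.length = m ∧ IsPermList l ∧
      ¬ Involves [3, 1, 2] l ∧ ¬ Involves [3, 2, 1] l ∧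
      Involves (iota n) l ∧ ¬ Involves (iota (n + 1)) l} = (avLis n m).ncard :=
  (Nat.card_congr (Equiv.subtypeEquivRight fun _ => mem_avLis_iff.symm)).trans
    (Nat.card_coe_set_eq _)

/-- If `p n` is the polynomial whose coefficient of `X^m` counts permutations of size `m`
avoiding `312` and `321` whose longest increasing subsequence has length exactly `n`,
then `p 0 = 1`, `p 1 = X + X²`, and `p n = (2X + X²) p (n−1) − X² p (n−2)` for `n ≥ 2`. -/
theorem lis_polynomial_recurrence (p : ℕ → Polynomial ℤ)
    (hp : ∀ n m : ℕ, (p n).coeff m =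
      (Nat.card {l : List ℕ // l.length = m ∧ IsPermList l ∧
        ¬ Involves [3, 1, 2] l ∧ ¬ Involves [3, 2, 1] l ∧
        Involves (iota n) l ∧ ¬ Involves (iota (n + 1)) l} : ℤ)) :
    p 0 = 1 ∧ p 1 = Polynomial.X + Polynomial.X ^ 2 ∧
      ∀ n : ℕ, 2 ≤ n →
        p n = (2 * Polynomial.X + Polynomial.X ^ 2) * p (n - 1)
          - Polynomial.X ^ 2 * p (n - 2) := by
  have hc : ∀ n m, (p n).coeff m = ((avLis n m).ncard : ℤ) := fun n m => by
    rw [hp, natCard_eq_ncard_avLis]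
  refine ⟨?_, ?_, fun n hn => ?_⟩
  · ext (_ | m) <;> simp [hc, Polynomial.coeff_one, ncard_avLis_zero_zero, avLis_zero_succ]
  · ext m
    rw [hc, ncard_avLis_one]
    simp only [Polynomial.coeff_add, Polynomial.coeff_X, Polynomial.coeff_X_pow]
    split_ifs <;> omega
  · obtain ⟨n, rfl⟩ := Nat.exists_eq_add_of_le' hn
    ext m
    match m with
    | 0 => simp [hc, avLis_eq_empty_of_lt]
    | 1 => simp [hc, avLis_eq_empty_of_lt, add_mul, mul_assoc, Polynomial.coeff_X_pow_mul']
    | m + 2 =>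
      simp only [hc, Nat.add_one_sub_one, add_tsub_cancel_right, add_mul, mul_assoc,
        Polynomial.coeff_sub, Polynomial.coeff_add, Polynomial.coeff_ofNat_mul,
        Polynomial.coeff_X_mul, Polynomial.coeff_X_pow_mul', le_add_iff_nonneg_left, zero_le,
        ↓reduceIte]
      have := ncard_avLis_add_two_add_two n m
      omega
end

section
/- Define polynomials q_n ∈ ℝ[t] by q_0 = 1, q_1 = 1 + t, and q_n = (2+t)·q_{n−1} − q_{n−2} for n ≥ 2. Then for every n ≥ 0, q_n(−4X²) = (−1)^n·U_{2n}(X) as an identity of polynomials in ℝ[X], where U_m denotes the Chebyshev polynomial of the second kind (U_0 = 1, U_1 = 2X, U_{m+2} = 2X·U_{m+1} − U_m). -/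
/-! Both sides satisfy `w (n + 2) = (2 - 4 X²) w (n + 1) - w n` with the same two initial
values: for `q n (-4X²)` by substituting into the recurrence of `q`, for `(-1)ⁿ U₂ₙ` by
eliminating the odd-index terms from the Chebyshev recurrence. -/

open Polynomial

theorem eq_of_linear_recurrence_two {R : Type*} [Ring R] (a : R) {f g : ℕ → R}
    (hf : ∀ n, f (n + 2) = a * f (n + 1) - f n) (hg : ∀ n, g (n + 2) = a * g (n + 1) - g n)
    (h0 : f 0 = g 0) (h1 : f 1 = g 1) : f = g := by
  funext n
  induction n using Nat.twoStepInduction with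
  | zero => exact h0
  | one => exact h1
  | more n ih ih' => rw [hf, hg, ih, ih']

theorem chebyshev_recurrence_add_four {R : Type*} [CommRing R] (x : R) {u : ℕ → R}
    (hu : ∀ m, u (m + 2) = 2 * x * u (m + 1) - u m) (m : ℕ) :
    u (m + 4) = (4 * x ^ 2 - 2) * u (m + 2) - u m := by
  linear_combination hu (m + 2) + 2 * x * hu (m + 1) + hu m

/-- If `q 0 = 1`, `q 1 = 1 + t`, `q n = (2 + t) q (n−1) − q (n−2)` and `U` satisfies the
Chebyshev (second kind) recurrence, then `q_n(−4X²) = (−1)^n U_{2n}(X)`. -/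
theorem q_eq_chebyshev (q U : ℕ → Polynomial ℝ)
    (hq0 : q 0 = 1) (hq1 : q 1 = 1 + Polynomial.X)
    (hq : ∀ n : ℕ, 2 ≤ n → q n = (2 + Polynomial.X) * q (n - 1) - q (n - 2))
    (hU0 : U 0 = 1) (hU1 : U 1 = 2 * Polynomial.X)
    (hU : ∀ m : ℕ, U (m + 2) = 2 * Polynomial.X * U (m + 1) - U m) :
    ∀ n : ℕ, (q n).comp (-4 * Polynomial.X ^ 2) = (-1) ^ n * U (2 * n) := by
  have hq_comp : ∀ n, (q (n + 2)).comp (-4 * X ^ 2) =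
      (2 - 4 * X ^ 2) * (q (n + 1)).comp (-4 * X ^ 2) - (q n).comp (-4 * X ^ 2) := fun n => by
    rw [show q (n + 2) = (2 + X) * q (n + 1) - q n from hq (n + 2) (by omega)]
    simp only [sub_comp, mul_comp, add_comp, X_comp, ofNat_comp]
    ring
  have hU_even : ∀ n, (-1) ^ (n + 2) * U (2 * (n + 2)) =
      (2 - 4 * X ^ 2) * ((-1) ^ (n + 1) * U (2 * (n + 1))) - (-1) ^ n * U (2 * n) := fun n => by
    rw [show 2 * (n + 2) = 2 * n + 4 by ring, show 2 * (n + 1) = 2 * n + 2 by ring,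
      chebyshev_recurrence_add_four X hU]
    ring
  refine congrFun (eq_of_linear_recurrence_two _ hq_comp hU_even ?_ ?_)
  · simp [hq0, hU0]
  · simp only [hq1, add_comp, one_comp, X_comp, hU 0, hU0, hU1]
    ring
end

section
/- Define polynomials q_n ∈ ℝ[t] by q_0 = 1, q_1 = 1 + t, and q_n = (2+t)·q_{n−1} − q_{n−2} for n ≥ 2. Then for every n ≥ 1 the polynomial q_n has a real root, every real root of q_n is negative, and, writing r_n for the greatest real root of q_n: r_1 = −1, the sequence (r_n)_{n≥1} is strictly increasing (r_n < r_{n+1} for all n ≥ 1), r_n < 0 for all n ≥ 1, and r_n > −1/2 for all n ≥ 2. -/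
/-!
Substituting `t = 2 cos θ - 2` turns the recurrence into the three-term recurrence of
`cos ((n + 1/2) θ)`, so `q n (2 cos θ - 2) * cos (θ / 2) = cos ((n + 1/2) θ)`. Hence
`q n` vanishes at `2 cos (π / (2n + 1)) - 2` and is positive on `(2 cos (π / (2n + 1)) - 2, 0)`,
while on `[0, ∞)` the values `q n (t)` increase with `n`, hence stay `≥ 1`. So the greatest root is
`r n = 2 cos (π / (2n + 1)) - 2`, which increases to `0`, with `r 1 = -1` and
`r 2 = (√5 - 3) / 2 > -1/2`.
-/

open Polynomial Real

noncomputable def qPoly : ℕ → ℝ[X]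
  | 0 => 1
  | 1 => 1 + X
  | n + 2 => (2 + X) * qPoly (n + 1) - qPoly n

theorem eq_qPoly_of_recurrence {q : ℕ → ℝ[X]} (hq0 : q 0 = 1) (hq1 : q 1 = 1 + X)
    (hq : ∀ n : ℕ, 2 ≤ n → q n = (2 + X) * q (n - 1) - q (n - 2)) : ∀ n, q n = qPoly n
  | 0 => hq0
  | 1 => hq1
  | n + 2 => by
    rw [hq (n + 2) (by omega), Nat.add_sub_cancel, show n + 2 - 1 = n + 1 from rfl,
      eq_qPoly_of_recurrence hq0 hq1 hq (n + 1), eq_qPoly_of_recurrence hq0 hq1 hq n, qPoly]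

theorem eval_qPoly_add_two (x : ℝ) (n : ℕ) :
    (qPoly (n + 2)).eval x = (2 + x) * (qPoly (n + 1)).eval x - (qPoly n).eval x := by
  simp [qPoly]

theorem eval_qPoly_two_mul_cos_sub_two_mul_cos_half (θ : ℝ) :
    ∀ n : ℕ, (qPoly n).eval (2 * cos θ - 2) * cos (θ / 2) = cos ((n + 1 / 2) * θ)
  | 0 => by simp [qPoly]; ring_nf
  | 1 => by
    obtain ⟨ψ, rfl⟩ : ∃ ψ, θ = 2 * ψ := ⟨θ / 2, by ring⟩
    rw [show 2 * ψ / 2 = ψ by ring, show ((1 : ℕ) + 1 / 2 : ℝ) * (2 * ψ) = 3 * ψ by push_cast; ring,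
      cos_three_mul, cos_two_mul]
    simp only [qPoly, eval_add, eval_one, eval_X]
    ring
  | n + 2 => by
    have ih₀ := eval_qPoly_two_mul_cos_sub_two_mul_cos_half θ n
    have ih₁ := eval_qPoly_two_mul_cos_sub_two_mul_cos_half θ (n + 1)
    set φ : ℝ := (n + 1 + 1 / 2) * θ
    have hadd : ((n + 2 : ℕ) + 1 / 2 : ℝ) * θ = φ + θ := by push_cast; ring
    have hsub : ((n : ℝ) + 1 / 2) * θ = φ - θ := by ring
    push_cast at ih₁
    rw [eval_qPoly_add_two, hadd, cos_add]
    rw [hsub, cos_sub] at ih₀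
    linear_combination (2 * cos θ) * ih₁ - ih₀

theorem one_le_eval_qPoly_and_le_succ {x : ℝ} (hx : 0 ≤ x) :
    ∀ n : ℕ, 1 ≤ (qPoly n).eval x ∧ (qPoly n).eval x ≤ (qPoly (n + 1)).eval x
  | 0 => by simp [qPoly]; linarith
  | n + 1 => by
    obtain ⟨h₁, h₂⟩ := one_le_eval_qPoly_and_le_succ hx n
    rw [eval_qPoly_add_two]
    constructor <;> nlinarith

theorem pi_div_two_mul_add_one_le_pi (n : ℕ) : π / (2 * n + 1) ≤ π :=
  div_le_self pi_pos.le (by linarith [n.cast_nonneg (α := ℝ)])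

theorem add_half_mul_pi_div (n : ℕ) : (n + 1 / 2) * (π / (2 * n + 1)) = π / 2 := by
  field_simp

theorem eval_qPoly_pos_of_lt_pi_div {n : ℕ} {θ : ℝ} (hθ₀ : 0 ≤ θ) (hθ : θ < π / (2 * n + 1)) :
    0 < (qPoly n).eval (2 * cos θ - 2) := by
  have hhalf : 0 < cos (θ / 2) :=
    cos_pos_of_mem_Ioo ⟨by linarith [pi_pos], by linarith [pi_div_two_mul_add_one_le_pi n]⟩
  have hangle : (n + 1 / 2) * θ < π / 2 := by
    calc (n + 1 / 2) * θ < (n + 1 / 2) * (π / (2 * n + 1)) := by gcongr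
      _ = π / 2 := add_half_mul_pi_div n
  have hpos : 0 < cos ((n + 1 / 2) * θ) := cos_pos_of_mem_Ioo ⟨by nlinarith, hangle⟩
  rw [← eval_qPoly_two_mul_cos_sub_two_mul_cos_half] at hpos
  exact pos_of_mul_pos_left hpos hhalf.le

noncomputable def qRoot (n : ℕ) : ℝ := 2 * cos (π / (2 * n + 1)) - 2

theorem eval_qPoly_qRoot {n : ℕ} (hn : 1 ≤ n) : (qPoly n).eval (qRoot n) = 0 := by
  have hn' : (1 : ℝ) < 2 * n + 1 := by
    have : (1 : ℝ) ≤ n := by exact_mod_cast hn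
    linarith
  have hhalf : cos (π / (2 * n + 1) / 2) ≠ 0 := by
    have : 0 < π / (2 * n + 1) := by positivity
    refine (cos_pos_of_mem_Ioo ⟨by linarith [pi_pos], ?_⟩).ne'
    linarith [div_lt_self pi_pos hn']
  have h := eval_qPoly_two_mul_cos_sub_two_mul_cos_half (π / (2 * n + 1)) n
  rw [add_half_mul_pi_div, cos_pi_div_two] at h
  exact (mul_eq_zero.1 h).resolve_right hhalf

theorem eval_qPoly_pos_of_qRoot_lt {n : ℕ} {x : ℝ} (hx : qRoot n < x) : 0 < (qPoly n).eval x := by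
  rcases le_or_gt 0 x with hx₀ | hx₀
  · exact one_pos.trans_le (one_le_eval_qPoly_and_le_succ hx₀ n).1
  have hcos : cos (π / (2 * n + 1)) < 1 + x / 2 := by unfold qRoot at hx; linarith
  have hθ : x = 2 * cos (arccos (1 + x / 2)) - 2 := by
    rw [cos_arccos (by linarith [neg_one_le_cos (π / (2 * n + 1))]) (by linarith)]
    ring
  rw [hθ]
  refine eval_qPoly_pos_of_lt_pi_div (arccos_nonneg _) ?_
  rw [← arccos_cos (by positivity) (pi_div_two_mul_add_one_le_pi n)]
  exact arccos_lt_arccos (neg_one_le_cos _) hcos (by linarith)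

theorem isGreatest_qRoot {n : ℕ} (hn : 1 ≤ n) :
    IsGreatest {x | (qPoly n).eval x = 0} (qRoot n) :=
  ⟨eval_qPoly_qRoot hn, fun _ hx => not_lt.1 fun hlt => (eval_qPoly_pos_of_qRoot_lt hlt).ne' hx⟩

theorem qRoot_strictMono : StrictMono qRoot := by
  intro m n hmn
  have hmn' : (m : ℝ) < n := by exact_mod_cast hmn
  have hlt : π / (2 * n + 1) < π / (2 * m + 1) := by gcongr
  unfold qRoot
  linarith [cos_lt_cos_of_nonneg_of_le_pi (by positivity) (pi_div_two_mul_add_one_le_pi m) hlt]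

theorem qRoot_neg (n : ℕ) : qRoot n < 0 := by
  have : cos (π / (2 * n + 1)) < cos 0 := cos_lt_cos_of_nonneg_of_le_pi le_rfl (pi_div_two_mul_add_one_le_pi n) (by positivity)
  unfold qRoot
  linarith [cos_zero]

theorem qRoot_one : qRoot 1 = -1 := by
  norm_num [qRoot, show π / (2 + 1) = π / 3 by norm_num]

theorem qRoot_two : qRoot 2 = (√5 - 3) / 2 := by
  rw [qRoot, show π / (2 * (2 : ℕ) + 1) = π / 5 by norm_num, cos_pi_div_five]
  ring

theorem neg_half_lt_qRoot {n : ℕ} (hn : 2 ≤ n) : -(1 / 2) < qRoot n := by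
  have : (2 : ℝ) < √5 := by
    rw [show (2 : ℝ) = √4 by rw [show (4 : ℝ) = 2 ^ 2 by norm_num, sqrt_sq two_pos.le]]
    exact sqrt_lt_sqrt (by norm_num) (by norm_num)
  linarith [qRoot_strictMono.monotone hn, qRoot_two]

/-- Properties of the greatest real roots `r n` of the polynomials `q n` defined by
`q 0 = 1`, `q 1 = 1 + t`, `q n = (2 + t) q (n−1) − q (n−2)`. -/
theorem q_root_properties (q : ℕ → Polynomial ℝ)
    (hq0 : q 0 = 1) (hq1 : q 1 = 1 + Polynomial.X)
    (hq : ∀ n : ℕ, 2 ≤ n → q n = (2 + Polynomial.X) * q (n - 1) - q (n - 2)) :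
    (∀ n : ℕ, 1 ≤ n → ∃ x : ℝ, (q n).eval x = 0) ∧
    (∀ n : ℕ, 1 ≤ n → ∀ x : ℝ, (q n).eval x = 0 → x < 0) ∧
    (∀ r : ℕ → ℝ,
      (∀ n : ℕ, 1 ≤ n → (q n).eval (r n) = 0 ∧ ∀ x : ℝ, (q n).eval x = 0 → x ≤ r n) →
      r 1 = -1 ∧ (∀ n : ℕ, 1 ≤ n → r n < r (n + 1)) ∧
        (∀ n : ℕ, 1 ≤ n → r n < 0) ∧ (∀ n : ℕ, 2 ≤ n → -(1 / 2) < r n)) := by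
  obtain rfl : q = qPoly := funext (eq_qPoly_of_recurrence hq0 hq1 hq)
  refine ⟨fun n hn => ⟨qRoot n, eval_qPoly_qRoot hn⟩,
    fun n hn x hx => ((isGreatest_qRoot hn).2 hx).trans_lt (qRoot_neg n), fun r hr => ?_⟩
  have hr_eq : ∀ n, 1 ≤ n → r n = qRoot n := fun n hn =>
    IsGreatest.unique ⟨(hr n hn).1, (hr n hn).2⟩ (isGreatest_qRoot hn)
  refine ⟨hr_eq 1 le_rfl ▸ qRoot_one, fun n hn => ?_, fun n hn => ?_, fun n hn => ?_⟩
  · rw [hr_eq n hn, hr_eq (n + 1) (by omega)]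
    exact qRoot_strictMono n.lt_succ_self
  · exact hr_eq n hn ▸ qRoot_neg n
  · exact hr_eq n (by omega) ▸ neg_half_lt_qRoot hn
end
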